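/- arXiv:2404.01670 — 13 statements merged into one kernel-verified Lean document; each statement's English description precedes it below -/
import Mathlib

section
/- If a frame F is m-transitive and a frame G is n-transitive, then the product frame F×G is (m+n)-transitive; that is, if R_F^{≤m} = R_F* and R_G^{≤n} = R_G*, then R_{F×G}^{≤m+n} = R_{F×G}*. -/
/-- `relPow R i` is the `i`-fold composition of the relation `R` with itself
(`R^0` is the identity relation). -/
def relPow {X : Type*} (R : X → X → Prop) : ℕ → X → X → Prop
  | 0 => fun x y => x = y
  | n + 1 => fun x z => ∃ y, R x y ∧ relPow R n y z

/-- `relLe R m = ⋃_{i ≤ m} R^i`. -/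
def relLe {X : Type*} (R : X → X → Prop) (m : ℕ) : X → X → Prop :=
  fun x y => ∃ i ≤ m, relPow R i x y

lemma relPow_rtg {X : Type*} {R : X → X → Prop} :
    ∀ {i x y}, relPow R i x y → Relation.ReflTransGen R x y := by
  intro i
  induction i with
  | zero => intro x y h; cases h; rfl
  | succ k ih =>
    rintro x y ⟨z, hz, hr⟩
    exact Relation.ReflTransGen.head hz (ih hr)

lemma relPow_comp {X : Type*} {R : X → X → Prop} :
    ∀ {i j x y z}, relPow R i x y → relPow R j y z → relPow R (i + j) x z := by
  intro i
  induction i with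
  | zero => intro j x y z h h'; cases h; simpa using h'
  | succ k ih =>
    rintro j x y z ⟨w, hw, hr⟩ h'
    have he : k + 1 + j = (k + j) + 1 := by omega
    rw [he]
    exact ⟨w, hw, ih hr h'⟩

/-- If a frame `F = (X, (R_a)_{a∈A})` is `m`-transitive and `G = (Y, (S_b)_{b∈B})` is
`n`-transitive, then the product frame `F × G` is `(m+n)`-transitive. -/
theorem stmt1 {A B X Y : Type*} [Finite A] [Finite B] [Nonempty X] [Nonempty Y]
    (R : A → X → X → Prop) (S : B → Y → Y → Prop) (m n : ℕ)
    (hF : relLe (fun x y => ∃ a, R a x y) m =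
      Relation.ReflTransGen (fun x y => ∃ a, R a x y))
    (hG : relLe (fun x y => ∃ b, S b x y) n =
      Relation.ReflTransGen (fun x y => ∃ b, S b x y)) :
    relLe (fun p q : X × Y =>
        ((∃ a, R a p.1 q.1) ∧ p.2 = q.2) ∨ (p.1 = q.1 ∧ ∃ b, S b p.2 q.2)) (m + n) =
      Relation.ReflTransGen (fun p q : X × Y =>
        ((∃ a, R a p.1 q.1) ∧ p.2 = q.2) ∨ (p.1 = q.1 ∧ ∃ b, S b p.2 q.2)) := by
  set RF := fun x y => ∃ a, R a x y with hRF
  set SG := fun x y => ∃ b, S b x y with hSG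
  set T := fun p q : X × Y =>
      ((∃ a, R a p.1 q.1) ∧ p.2 = q.2) ∨ (p.1 = q.1 ∧ ∃ b, S b p.2 q.2) with hT
  -- horizontal lift
  have horiz : ∀ i x x' (y : Y), relPow RF i x x' → relPow T i (x, y) (x', y) := by
    intro i
    induction i with
    | zero => intro x x' y h; cases h; rfl
    | succ k ih =>
      rintro x x' y ⟨z, hz, hr⟩
      exact ⟨(z, y), Or.inl ⟨hz, rfl⟩, ih z x' y hr⟩
  have vert : ∀ j (x : X) y y', relPow SG j y y' → relPow T j (x, y) (x, y') := by
    intro j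
    induction j with
    | zero => intro x y y' h; cases h; rfl
    | succ k ih =>
      rintro x y y' ⟨z, hz, hr⟩
      exact ⟨(x, z), Or.inr ⟨rfl, hz⟩, ih x z y' hr⟩
  ext p q
  constructor
  · rintro ⟨i, _, h⟩
    exact relPow_rtg h
  · intro h
    -- project to both components
    have proj : Relation.ReflTransGen RF p.1 q.1 ∧ Relation.ReflTransGen SG p.2 q.2 := by
      induction h with
      | refl => exact ⟨.refl, .refl⟩
      | tail _ hstep ih =>
        rcases hstep with ⟨ha, he⟩ | ⟨he, hb⟩
        · exact ⟨ih.1.tail ha, he ▸ ih.2⟩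
        · exact ⟨he ▸ ih.1, ih.2.tail hb⟩
    obtain ⟨h1, h2⟩ := proj
    rw [← hF] at h1
    rw [← hG] at h2
    obtain ⟨i, hi, hpi⟩ := h1
    obtain ⟨j, hj, hpj⟩ := h2
    refine ⟨i + j, Nat.add_le_add hi hj, ?_⟩
    have := relPow_comp (horiz i p.1 q.1 p.2 hpi) (vert j q.1 p.2 q.2 hpj)
    simpa using this
end

section
/- Let F and G be frames with h(F) = h₁ and h(G) = h₂ for finite h₁, h₂ ≥ 1. Then the product frame F×G has height h(F×G) = h₁ + h₂ − 1. -/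
/-- `IsStrictChain Rs n x` : the points `x 0, …, x (n-1)` form a strictly ascending chain
with respect to the preorder `Rs` (intended: `Rs` the reflexive-transitive closure `R*`),
i.e. `x i R* x (i+1)` and `¬ x (i+1) R* x i` for all `i < n - 1`. -/
def IsStrictChain {X : Type*} (Rs : X → X → Prop) (n : ℕ) (x : ℕ → X) : Prop :=
  ∀ i, i + 1 < n → Rs (x i) (x (i + 1)) ∧ ¬ Rs (x (i + 1)) (x i)

/-- The frame with union relation `R` has height exactly `h`: there is a strict chain of
`h` points (with respect to `R*`) and no strict chain of `h + 1` points. -/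
def HasHeight {X : Type*} (R : X → X → Prop) (h : ℕ) : Prop :=
  (∃ x : ℕ → X, IsStrictChain (Relation.ReflTransGen R) h x) ∧
    ∀ x : ℕ → X, ¬ IsStrictChain (Relation.ReflTransGen R) (h + 1) x

section Aux

variable {X Y : Type*}

/-- The product relation. -/
def TT (RR : X → X → Prop) (SS : Y → Y → Prop) : X × Y → X × Y → Prop :=
  fun p q => (RR p.1 q.1 ∧ p.2 = q.2) ∨ (p.1 = q.1 ∧ SS p.2 q.2)

variable {RR : X → X → Prop} {SS : Y → Y → Prop}

theorem liftH {x x' : X} (y : Y) (h : Relation.ReflTransGen RR x x') :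
    Relation.ReflTransGen (TT RR SS) (x, y) (x', y) := by
  induction h with
  | refl => exact .refl
  | tail _ hs ih => exact ih.tail (Or.inl ⟨hs, rfl⟩)

theorem liftV (x : X) {y y' : Y} (h : Relation.ReflTransGen SS y y') :
    Relation.ReflTransGen (TT RR SS) (x, y) (x, y') := by
  induction h with
  | refl => exact .refl
  | tail _ hs ih => exact ih.tail (Or.inr ⟨rfl, hs⟩)

theorem projT {p q : X × Y} (h : Relation.ReflTransGen (TT RR SS) p q) :
    Relation.ReflTransGen RR p.1 q.1 ∧ Relation.ReflTransGen SS p.2 q.2 := by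
  induction h with
  | refl => exact ⟨.refl, .refl⟩
  | tail _ hs ih =>
    rcases hs with ⟨hr, he⟩ | ⟨he, hs2⟩
    · exact ⟨ih.1.tail hr, he ▸ ih.2⟩
    · exact ⟨he ▸ ih.1, ih.2.tail hs2⟩

theorem liftProd {p q : X × Y} (h1 : Relation.ReflTransGen RR p.1 q.1)
    (h2 : Relation.ReflTransGen SS p.2 q.2) :
    Relation.ReflTransGen (TT RR SS) p q := by
  have := (liftH (SS := SS) p.2 h1).trans (liftV q.1 h2)
  simpa using this

/-- Key lemma: from a strict chain of length `m` in the product one extracts strict chains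
of lengths `p` and `q` in the factors, ending at the components of the last point, with
`p + q ≥ m + 1`. -/
theorem key : ∀ m, 1 ≤ m → ∀ z : ℕ → X × Y,
    IsStrictChain (Relation.ReflTransGen (TT RR SS)) m z →
    ∃ p q, ∃ u : ℕ → X, ∃ v : ℕ → Y,
      IsStrictChain (Relation.ReflTransGen RR) p u ∧
      IsStrictChain (Relation.ReflTransGen SS) q v ∧
      1 ≤ p ∧ 1 ≤ q ∧ m + 1 ≤ p + q ∧
      u (p - 1) = (z (m - 1)).1 ∧ v (q - 1) = (z (m - 1)).2 := by
  intro m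
  induction m with
  | zero => omega
  | succ m ih =>
    intro _ z hz
    by_cases hm : m = 0
    · subst hm
      exact ⟨1, 1, fun _ => (z 0).1, fun _ => (z 0).2,
        fun i hi => absurd hi (by omega), fun i hi => absurd hi (by omega),
        le_refl 1, le_refl 1, by omega, rfl, rfl⟩
    · have hm1 : 1 ≤ m := by omega
      obtain ⟨p, q, u, v, hu, hv, hp, hq, hpq, hue, hve⟩ :=
        ih hm1 z (fun i hi => hz i (by omega))
      have hstep := hz (m - 1) (by omega)
      rw [show m - 1 + 1 = m from by omega] at hstep
      obtain ⟨hfwd, hback⟩ := hstep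
      have hproj := projT hfwd
      by_cases hxb : Relation.ReflTransGen RR (z m).1 (z (m - 1)).1
      · -- then the step is strict in the `Y` component
        have hyb : ¬ Relation.ReflTransGen SS (z m).2 (z (m - 1)).2 := fun hyy =>
          hback (liftProd hxb hyy)
        refine ⟨p, q + 1, fun j => if j + 1 < p then u j else (z m).1,
          fun j => if j < q then v j else (z m).2, ?_, ?_, by omega, by omega, by omega,
          by simp only [if_neg (show ¬(p - 1 + 1 < p) by omega), Nat.add_sub_cancel], by simp⟩
        · intro i hi
          by_cases h2 : i + 1 + 1 < p
          · simpa [hi, h2] using hu i hi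
          · have hip : i + 1 = p - 1 := by omega
            have hui : u (i + 1) = (z (m - 1)).1 := by rw [hip, hue]
            simp only [hi, h2, if_pos, if_neg, if_true, if_false]
            constructor
            · exact ((hu i hi).1.trans (hui ▸ hproj.1))
            · intro hb
              exact (hu i hi).2 (hui ▸ (hproj.1.trans hb))
        · intro i hi
          by_cases h2 : i + 1 < q
          · have h3 : i < q := by omega
            simpa [h2, h3] using hv i h2
          · have h3 : i < q := by omega
            have hii : i = q - 1 := by omega
            have hvi : v i = (z (m - 1)).2 := by rw [hii, hve]
            simp only [h2, h3, if_pos, if_neg, if_true, if_false]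
            constructor
            · exact hvi ▸ hproj.2
            · intro hb
              exact hyb (hvi ▸ hb)
      · -- the step is strict in the `X` component
        refine ⟨p + 1, q, fun j => if j < p then u j else (z m).1,
          fun j => if j + 1 < q then v j else (z m).2, ?_, ?_, by omega, by omega, by omega,
          by simp, by simp only [if_neg (show ¬(q - 1 + 1 < q) by omega), Nat.add_sub_cancel]⟩
        · intro i hi
          by_cases h2 : i + 1 < p
          · have h3 : i < p := by omega
            simpa [h2, h3] using hu i h2
          · have h3 : i < p := by omega
            have hii : i = p - 1 := by omega
            have hui : u i = (z (m - 1)).1 := by rw [hii, hue]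
            simp only [h2, h3, if_pos, if_neg, if_true, if_false]
            constructor
            · exact hui ▸ hproj.1
            · intro hb
              exact hxb (hui ▸ hb)
        · intro i hi
          by_cases h2 : i + 1 + 1 < q
          · simpa [hi, h2] using hv i hi
          · have hip : i + 1 = q - 1 := by omega
            have hvi : v (i + 1) = (z (m - 1)).2 := by rw [hip, hve]
            simp only [hi, h2, if_pos, if_neg, if_true, if_false]
            constructor
            · exact ((hv i hi).1.trans (hvi ▸ hproj.2))
            · intro hb
              exact (hv i hi).2 (hvi ▸ (hproj.2.trans hb))

end Aux

/-- If `h(F) = h₁` and `h(G) = h₂` (finite, `≥ 1`), then the product frame `F × G`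
has height `h₁ + h₂ - 1`. -/
theorem stmt2 {A B X Y : Type*} [Finite A] [Finite B] [Nonempty X] [Nonempty Y]
    (R : A → X → X → Prop) (S : B → Y → Y → Prop) (h₁ h₂ : ℕ)
    (hh1 : 1 ≤ h₁) (hh2 : 1 ≤ h₂)
    (hF : HasHeight (fun x y => ∃ a, R a x y) h₁)
    (hG : HasHeight (fun x y => ∃ b, S b x y) h₂) :
    HasHeight (fun p q : X × Y =>
        ((∃ a, R a p.1 q.1) ∧ p.2 = q.2) ∨ (p.1 = q.1 ∧ ∃ b, S b p.2 q.2))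
      (h₁ + h₂ - 1) := by
  set RR : X → X → Prop := fun x y => ∃ a, R a x y with hRR
  set SS : Y → Y → Prop := fun x y => ∃ b, S b x y with hSS
  have hT : (fun p q : X × Y =>
        ((∃ a, R a p.1 q.1) ∧ p.2 = q.2) ∨ (p.1 = q.1 ∧ ∃ b, S b p.2 q.2)) = TT RR SS := rfl
  rw [hT]
  obtain ⟨xc, hxc⟩ := hF.1
  obtain ⟨yc, hyc⟩ := hG.1
  constructor
  · -- lower bound: concatenated chain
    refine ⟨fun j => (xc (min j (h₁ - 1)), yc (j - (h₁ - 1))), ?_⟩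
    intro i hi
    by_cases hc : i + 1 < h₁
    · have e1 : min i (h₁ - 1) = i := by omega
      have e2 : min (i + 1) (h₁ - 1) = i + 1 := by omega
      have e3 : i - (h₁ - 1) = 0 := by omega
      have e4 : i + 1 - (h₁ - 1) = 0 := by omega
      simp only [e1, e2, e3, e4]
      obtain ⟨hf, hb⟩ := hxc i hc
      constructor
      · exact liftH _ hf
      · intro hcon
        exact hb (projT hcon).1
    · have e1 : min i (h₁ - 1) = h₁ - 1 := by omega
      have e2 : min (i + 1) (h₁ - 1) = h₁ - 1 := by omega
      have e4 : i + 1 - (h₁ - 1) = (i - (h₁ - 1)) + 1 := by omega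
      simp only [e1, e2, e4]
      obtain ⟨hf, hb⟩ := hyc (i - (h₁ - 1)) (by omega)
      constructor
      · exact liftV _ hf
      · intro hcon
        exact hb (projT hcon).2
  · -- upper bound
    intro z hz
    have hm : 1 ≤ h₁ + h₂ - 1 + 1 := by omega
    obtain ⟨p, q, u, v, hu, hv, hp, hq, hpq, -, -⟩ := key _ hm z hz
    have hpb : p ≤ h₁ := by
      by_contra hcon
      exact hF.2 u (fun i hi => hu i (by omega))
    have hqb : q ≤ h₂ := by
      by_contra hcon
      exact hG.2 v (fun i hi => hv i (by omega))
    omega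
end

section
/- Let 𝓕 and 𝓖 be classes of frames, and suppose there is m < ω such that for all F∈𝓕 and G∈𝓖, the union of all (horizontal and vertical) relations of the product frame F*×G* satisfies RP_m. Then there is N < ω such that either every cluster of every frame in 𝓕 has at most N elements, or every cluster of every frame in 𝓖 has at most N elements. -/
/-- The union `R_F = ⋃_{a∈A} R_a` of the relations of a frame. -/
def unionRel {A X : Type*} (R : A → X → X → Prop) : X → X → Prop :=
  fun x y => ∃ a, R a x y

/-- The cluster of the point `x`: its equivalence class under `R* ∩ (R*)⁻¹`. -/
def clusterOf {X : Type*} (R : X → X → Prop) (x : X) : Set X :=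
  {y | Relation.ReflTransGen R x y ∧ Relation.ReflTransGen R y x}

/-- `RP R m` : every `R`-path `x 0 R x 1 R … R x (m+1)` has a repeated point or a shortcut
`x i R x (j+1)` with `i < j ≤ m`. -/
def RP {X : Type*} (R : X → X → Prop) (m : ℕ) : Prop :=
  ∀ x : ℕ → X, (∀ i ≤ m, R (x i) (x (i + 1))) →
    (∃ i j, i < j ∧ j ≤ m + 1 ∧ x i = x j) ∨
      (∃ i j, i < j ∧ j ≤ m ∧ R (x i) (x (j + 1)))

lemma exists_inj_of_large {X : Type*} (s : Set X) (N : ℕ)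
    (h : ¬(s.Finite ∧ s.ncard ≤ N)) :
    ∃ f : Fin (N + 1) → X, Function.Injective f ∧ ∀ k, f k ∈ s := by
  have ht : ∃ t ⊆ s, t.Finite ∧ t.ncard = N + 1 := by
    by_cases hf : s.Finite
    · have hn : N + 1 ≤ s.ncard := by
        rcases Nat.lt_or_ge N s.ncard with h1 | h1
        · omega
        · exact absurd ⟨hf, h1⟩ h
      obtain ⟨t, hts, htc⟩ := Set.exists_subset_card_eq hn
      exact ⟨t, hts, hf.subset hts, htc⟩
    · exact Set.Infinite.exists_subset_ncard_eq hf (N + 1)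
  obtain ⟨t, hts, htf, htc⟩ := ht
  haveI := htf.fintype
  have hcard : Fintype.card t = N + 1 := by
    rw [← Nat.card_eq_fintype_card, Nat.card_coe_set_eq]; exact htc
  let e := (Fintype.equivFinOfCardEq hcard).symm
  exact ⟨fun k => (e k : X), fun a b hab => e.injective (Subtype.ext hab),
    fun k => hts (e k).2⟩

/-- If for some `m`, for all frames `F` in the class `𝓕` (indexed by `ι₁`) and `G` in the
class `𝓖` (indexed by `ι₂`), the union of all relations of `F* × G*` satisfies `RP_m`,
then there is `N` such that all clusters of all frames of `𝓕` have at most `N` elements,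
or all clusters of all frames of `𝓖` have at most `N` elements. -/
theorem stmt4 {A B : Type*} [Finite A] [Finite B] {ι₁ ι₂ : Type*}
    (X : ι₁ → Type*) (Y : ι₂ → Type*) [∀ i, Nonempty (X i)] [∀ j, Nonempty (Y j)]
    (R : ∀ i, A → X i → X i → Prop) (S : ∀ j, B → Y j → Y j → Prop)
    (m : ℕ)
    (hrp : ∀ i j, RP (fun p q : X i × Y j =>
        (Relation.ReflTransGen (unionRel (R i)) p.1 q.1 ∧ p.2 = q.2) ∨
          (p.1 = q.1 ∧ Relation.ReflTransGen (unionRel (S j)) p.2 q.2)) m) :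
    ∃ N : ℕ,
      (∀ i, ∀ x : X i, (clusterOf (unionRel (R i)) x).Finite ∧
          (clusterOf (unionRel (R i)) x).ncard ≤ N) ∨
      (∀ j, ∀ y : Y j, (clusterOf (unionRel (S j)) y).Finite ∧
          (clusterOf (unionRel (S j)) y).ncard ≤ N) := by
  by_contra hcon
  push_neg at hcon
  obtain ⟨hF, hG⟩ := hcon (m + 2)
  obtain ⟨i, x, hx⟩ := hF
  obtain ⟨j, y, hy⟩ := hG
  obtain ⟨f, hfinj, hfmem⟩ := exists_inj_of_large _ (m + 2)
    (fun ⟨a, b⟩ => absurd b (Nat.not_le.mpr (hx a)))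
  obtain ⟨f', hf'inj, hf'mem⟩ := exists_inj_of_large _ (m + 2)
    (fun ⟨a, b⟩ => absurd b (Nat.not_le.mpr (hy a)))
  set g : ℕ → X i := fun n => f ⟨min n (m + 2), by omega⟩ with hg
  set g' : ℕ → Y j := fun n => f' ⟨min n (m + 2), by omega⟩ with hg'
  have ginj : ∀ a b, a ≤ m + 2 → b ≤ m + 2 → g a = g b → a = b := by
    intro a b ha hb hab
    have := hfinj hab
    have := Fin.mk.injEq .. ▸ this
    omega
  have g'inj : ∀ a b, a ≤ m + 2 → b ≤ m + 2 → g' a = g' b → a = b := by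
    intro a b ha hb hab
    have := hf'inj hab
    have := Fin.mk.injEq .. ▸ this
    omega
  have gR : ∀ a b, Relation.ReflTransGen (unionRel (R i)) (g a) (g b) :=
    fun a b => (hfmem _).2.trans (hfmem _).1
  have g'S : ∀ a b, Relation.ReflTransGen (unionRel (S j)) (g' a) (g' b) :=
    fun a b => (hf'mem _).2.trans (hf'mem _).1
  set P : ℕ → X i × Y j := fun k => (g ((k + 1) / 2), g' (k / 2)) with hP
  have hpath : ∀ k ≤ m, ((Relation.ReflTransGen (unionRel (R i)) (P k).1 (P (k+1)).1 ∧
      (P k).2 = (P (k+1)).2) ∨ ((P k).1 = (P (k+1)).1 ∧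
      Relation.ReflTransGen (unionRel (S j)) (P k).2 (P (k+1)).2)) := by
    intro k _
    rcases Nat.even_or_odd k with ⟨r, hr⟩ | ⟨r, hr⟩
    · exact Or.inl ⟨gR _ _, congrArg g' (by omega)⟩
    · exact Or.inr ⟨congrArg g (by omega), g'S _ _⟩
  rcases hrp i j P hpath with ⟨a, b, hab, hbm, heq⟩ | ⟨a, b, hab, hbm, hr⟩
  · have h1 : g ((a + 1) / 2) = g ((b + 1) / 2) := congrArg Prod.fst heq
    have h2 : g' (a / 2) = g' (b / 2) := congrArg Prod.snd heq
    have e1 := ginj _ _ (by omega) (by omega) h1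
    have e2 := g'inj _ _ (by omega) (by omega) h2
    omega
  · rcases hr with ⟨-, h2⟩ | ⟨h1, -⟩
    · have e2 := g'inj (a / 2) ((b + 1) / 2) (by omega) (by omega) h2
      omega
    · have e1 := ginj ((a + 1) / 2) ((b + 1 + 1) / 2) (by omega) (by omega) h1
      omega
end

section
/- Let h₁, h₂, N < ω and let f:ℕ→ℕ be monotone. Let 𝓕 be a class of frames of height ≤ h₁ such that every cluster-restriction F↾C (F∈𝓕, C a cluster of F) is f-tunable, and let 𝓖 be a class of frames of height ≤ h₂ such that every cluster of every frame in 𝓖 has at most N elements. Then the class 𝓕×𝓖 = {F×G : F∈𝓕, G∈𝓖} is uniformly tunable, i.e., there is a single function t:ℕ→ℕ (depending only on f, h₁, h₂, N and the index sets) such that every F×G with F∈𝓕, G∈𝓖 is t-tunable. -/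
universe u

/-- A partition of the set `X`: a family of nonempty, pairwise disjoint sets covering `X`. -/
def IsPartition {X : Type*} (P : Set (Set X)) : Prop :=
  (∀ U ∈ P, U.Nonempty) ∧ (∀ U ∈ P, ∀ V ∈ P, U ≠ V → Disjoint U V) ∧ ⋃₀ P = Set.univ

/-- `Q` refines `P`: every element of `Q` is contained in some element of `P`. -/
def Refines {X : Type*} (Q P : Set (Set X)) : Prop :=
  ∀ u ∈ Q, ∃ v ∈ P, u ⊆ v

/-- A partition `P` is `R`-tuned. -/
def TunedRel {X : Type*} (R : X → X → Prop) (P : Set (Set X)) : Prop :=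
  ∀ U ∈ P, ∀ V ∈ P, (∃ a ∈ U, ∃ b ∈ V, R a b) → ∀ a ∈ U, ∃ b ∈ V, R a b

/-- A partition is tuned in the frame `(X, (R_a)_{a∈A})` if it is `R_a`-tuned for each `a`. -/
def TunedFrame {A X : Type*} (R : A → X → X → Prop) (P : Set (Set X)) : Prop :=
  ∀ a, TunedRel (R a) P

/-- The frame `(X, (R_a)_{a∈A})` is `f`-tunable. -/
def Tunable {A X : Type*} (R : A → X → X → Prop) (f : ℕ → ℕ) : Prop :=
  ∀ P : Set (Set X), IsPartition P → P.Finite →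
    ∃ Q : Set (Set X), IsPartition Q ∧ Refines Q P ∧ TunedFrame R Q ∧
      Q.Finite ∧ Q.ncard ≤ f P.ncard

/-- The family of relations of the product frame `F × G`. -/
def prodRel {A B X Y : Type*} (R : A → X → X → Prop) (S : B → Y → Y → Prop) :
    A ⊕ B → X × Y → X × Y → Prop
  | Sum.inl a => fun p q => R a p.1 q.1 ∧ p.2 = q.2
  | Sum.inr b => fun p q => p.1 = q.1 ∧ S b p.2 q.2

/-- The frame with union relation `R` has height at most `h`. -/
def HeightLe {X : Type*} (R : X → X → Prop) (h : ℕ) : Prop :=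
  ∀ x : ℕ → X, ¬ IsStrictChain (Relation.ReflTransGen R) (h + 1) x

namespace S5
open Relation

attribute [local instance] Classical.propDecidable

section part
variable {X W : Type*}

lemma cell_unique {P : Set (Set X)} (hP : IsPartition P)
    {U V : Set X} (hU : U ∈ P) (hV : V ∈ P) {x : X} (hxU : x ∈ U) (hxV : x ∈ V) : U = V := by
  by_contra hne
  exact (hP.2.1 U hU V hV hne).ne_of_mem hxU hxV rfl

lemma exists_cell {P : Set (Set X)} (hP : IsPartition P) (x : X) : ∃ U ∈ P, x ∈ U := by
  have : x ∈ ⋃₀ P := hP.2.2 ▸ Set.mem_univ x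
  exact this

/-- fibers of a map, as a partition -/
def fibers (g : X → W) : Set (Set X) := (fun w => g ⁻¹' {w}) '' Set.range g

lemma fibers_isPartition (g : X → W) : IsPartition (fibers g) := by
  refine ⟨?_, ?_, ?_⟩
  · rintro U ⟨w, ⟨x, rfl⟩, rfl⟩; exact ⟨x, rfl⟩
  · rintro U ⟨w, hw, rfl⟩ V ⟨w', hw', rfl⟩ hne
    rw [Set.disjoint_left]
    rintro x (hx : g x = w) (hx' : g x = w')
    exact hne (by rw [← hx, ← hx'])
  · ext x
    simp only [Set.mem_sUnion, Set.mem_univ, iff_true]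
    exact ⟨g ⁻¹' {g x}, ⟨g x, ⟨x, rfl⟩, rfl⟩, rfl⟩

lemma mem_fibers_self (g : X → W) (x : X) : g ⁻¹' {g x} ∈ fibers g :=
  ⟨g x, ⟨x, rfl⟩, rfl⟩

lemma fibers_subset_range_ncard {T : Type*} [Finite T] {Q : Set (Set X)} {F : T → Set X}
    (hQ : Q ⊆ Set.range F) : Q.Finite ∧ Q.ncard ≤ Nat.card T := by
  have hr : (Set.range F).Finite := Set.finite_range F
  refine ⟨hr.subset hQ, ?_⟩
  calc Q.ncard ≤ (Set.range F).ncard := Set.ncard_le_ncard hQ hr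
    _ = ((Set.univ : Set T).image F).ncard := by rw [Set.image_univ]
    _ ≤ (Set.univ : Set T).ncard := Set.ncard_image_le Set.finite_univ
    _ = Nat.card T := Set.ncard_univ T

lemma fibers_finite [Finite W] (g : X → W) :
    (fibers g).Finite ∧ (fibers g).ncard ≤ Nat.card W :=
  fibers_subset_range_ncard (by rintro U ⟨w, _, rfl⟩; exact ⟨w, rfl⟩)

lemma exists_injOn_fin {α : Type*} {s : Set α} (hfin : s.Finite) {m : ℕ} (hm : s.ncard ≤ m)
    (hm0 : 0 < m) : ∃ e : α → Fin m, Set.InjOn e s := by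
  classical
  haveI := hfin.to_subtype
  obtain ⟨n, ⟨φ⟩⟩ := Finite.exists_equiv_fin s
  have hn : n = s.ncard := by
    rw [← Nat.card_coe_set_eq]; exact (Nat.card_eq_of_equiv_fin φ).symm
  have hle : n ≤ m := hn ▸ hm
  refine ⟨fun a => if h : a ∈ s then Fin.castLE hle (φ ⟨a, h⟩) else ⟨0, hm0⟩, ?_⟩
  intro a ha b hb hab
  simp only [dif_pos ha, dif_pos hb] at hab
  have h2 : φ ⟨a, ha⟩ = φ ⟨b, hb⟩ := (Fin.castLE_injective hle) hab
  exact congrArg Subtype.val (φ.injective h2)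

/-- coloring with coherent successor sets gives a tuned refinement -/
lemma coloring_to_tuned {A : Type*} {K : Type*} [Finite K] (R : A → X → X → Prop)
    (P : Set (Set X)) (hP : IsPartition P) (c : X → K)
    (href : ∀ x y, c x = c y → ∀ V ∈ P, x ∈ V → y ∈ V)
    (hcoh : ∀ a x y, c x = c y →
      {w | ∃ z, R a x z ∧ c z = w} = {w | ∃ z, R a y z ∧ c z = w}) :
    ∃ Q : Set (Set X), IsPartition Q ∧ Refines Q P ∧ TunedFrame R Q ∧
      Q.Finite ∧ Q.ncard ≤ Nat.card K := by
  refine ⟨fibers c, fibers_isPartition c, ?_, ?_, (fibers_finite c).1, (fibers_finite c).2⟩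
  · rintro u ⟨w, ⟨x0, rfl⟩, rfl⟩
    obtain ⟨V, hV, hx0⟩ := exists_cell hP x0
    exact ⟨V, hV, fun y hy => href x0 y (hy : c y = c x0).symm V hV hx0⟩
  · intro a U hU V hV ⟨x, hxU, y, hyV, hR⟩ x' hx'U
    obtain ⟨w, ⟨x0, rfl⟩, rfl⟩ := hU
    obtain ⟨w', ⟨y0, rfl⟩, rfl⟩ := hV
    have hcx : c x = c x' := by
      rw [(hxU : c x = c x0), (hx'U : c x' = c x0)]
    have : c y ∈ {w | ∃ z, R a x' z ∧ c z = w} := by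
      rw [← hcoh a x x' hcx]; exact ⟨y, hR, rfl⟩
    obtain ⟨z, hz, hcz⟩ := this
    exact ⟨z, by rw [Set.mem_preimage, Set.mem_singleton_iff, hcz]; exact hyV, hz⟩


end part

lemma tunable_of_equiv {A Z Z' : Type*} (e : Z ≃ Z') (R : A → Z → Z → Prop)
    (R' : A → Z' → Z' → Prop) (hR : ∀ a z w, R a z w ↔ R' a (e z) (e w))
    (f : ℕ → ℕ) (hT : Tunable R f) : Tunable R' f := by
  intro P' hP' hP'fin
  set P : Set (Set Z) := (fun V => e ⁻¹' V) '' P' with hPdef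
  have hinj : Set.InjOn (fun V : Set Z' => e ⁻¹' V) P' := fun U _ V _ h => by
    have := congrArg (fun s => e '' s) h
    simpa [Set.image_preimage_eq _ e.surjective] using this
  have hPfin : P.Finite := hP'fin.image _
  have hPncard : P.ncard = P'.ncard := Set.ncard_image_of_injOn hinj
  have hP : IsPartition P := by
    refine ⟨?_, ?_, ?_⟩
    · rintro U ⟨V, hV, rfl⟩
      obtain ⟨y, hy⟩ := hP'.1 V hV
      exact ⟨e.symm y, by simp [hy]⟩
    · rintro U ⟨V, hV, rfl⟩ U' ⟨V', hV', rfl⟩ hne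
      have : V ≠ V' := fun h => hne (by rw [h])
      have hd := hP'.2.1 V hV V' hV' this
      exact Set.disjoint_left.mpr fun x hx hx' => Set.disjoint_left.mp hd hx hx'
    · ext x
      simp only [Set.mem_univ, iff_true, Set.mem_sUnion]
      obtain ⟨V, hV, hx⟩ : ∃ V ∈ P', e x ∈ V := by
        have : e x ∈ ⋃₀ P' := hP'.2.2 ▸ Set.mem_univ _
        exact this
      exact ⟨e ⁻¹' V, ⟨V, hV, rfl⟩, hx⟩
  obtain ⟨Q, hQ, hQref, hQtun, hQfin, hQcard⟩ := hT P hP hPfin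
  refine ⟨(fun u => e '' u) '' Q, ⟨?_, ?_, ?_⟩, ?_, ?_, hQfin.image _, ?_⟩
  · rintro U ⟨u, hu, rfl⟩
    exact (hQ.1 u hu).image e
  · rintro U ⟨u, hu, rfl⟩ U' ⟨u', hu', rfl⟩ hne
    have : u ≠ u' := fun h => hne (by rw [h])
    have hd := hQ.2.1 u hu u' hu' this
    rw [Set.disjoint_left]
    rintro x ⟨z, hz, rfl⟩ ⟨z', hz', hzz'⟩
    have : z' = z := e.injective hzz'
    exact Set.disjoint_left.mp hd hz (this ▸ hz')
  · ext y
    simp only [Set.mem_univ, iff_true, Set.mem_sUnion]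
    obtain ⟨u, hu, hx⟩ : ∃ u ∈ Q, e.symm y ∈ u := by
      have : e.symm y ∈ ⋃₀ Q := hQ.2.2 ▸ Set.mem_univ _
      exact this
    exact ⟨e '' u, ⟨u, hu, rfl⟩, ⟨e.symm y, hx, by simp⟩⟩
  · rintro U ⟨u, hu, rfl⟩
    obtain ⟨v, hv, huv⟩ := hQref u hu
    obtain ⟨V, hV, rfl⟩ := hv
    exact ⟨V, hV, by
      rintro y ⟨z, hz, rfl⟩
      exact huv hz⟩
  · intro a U hU V hV hex x' hx'
    obtain ⟨u, hu, rfl⟩ := hU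
    obtain ⟨v, hv, rfl⟩ := hV
    obtain ⟨x, ⟨z, hz, rfl⟩, y, ⟨w, hw, rfl⟩, hRxy⟩ := hex
    obtain ⟨z', hz', rfl⟩ := hx'
    have : ∃ b ∈ v, R a z' b :=
      hQtun a u hu v hv ⟨z, hz, w, hw, (hR a z w).mpr hRxy⟩ z' hz'
    obtain ⟨b, hb, hRb⟩ := this
    exact ⟨e b, ⟨b, hb, rfl⟩, (hR a z' b).mp hRb⟩
  · calc ((fun u => e '' u) '' Q).ncard ≤ Q.ncard := Set.ncard_image_le hQfin
      _ ≤ f P.ncard := hQcard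
      _ = f P'.ncard := by rw [hPncard]


section rank
variable {X : Type*} {R : X → X → Prop} {h : ℕ}

def SChain (R : X → X → Prop) (n : ℕ) (x : X) : Prop :=
  ∃ z : ℕ → X, z 0 = x ∧ ∀ i < n,
    ReflTransGen R (z i) (z (i + 1)) ∧ ¬ ReflTransGen R (z (i + 1)) (z i)

lemma sChain_zero (R : X → X → Prop) (x : X) : SChain R 0 x :=
  ⟨fun _ => x, rfl, fun i hi => absurd hi (by omega)⟩

lemma sChain_anti {m n : ℕ} (hmn : m ≤ n) {x : X} (hc : SChain R n x) : SChain R m x := by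
  obtain ⟨z, hz0, hz⟩ := hc
  exact ⟨z, hz0, fun i hi => hz i (lt_of_lt_of_le hi hmn)⟩

lemma not_sChain_of_heightLe (hH : HeightLe R h) (x : X) : ¬ SChain R h x := by
  rintro ⟨z, _, hz⟩
  exact hH z fun i hi => hz i (by omega)

lemma heightLe_of_not_sChain (hH : ∀ x : X, ¬ SChain R h x) : HeightLe R h := by
  intro z hz
  exact hH (z 0) ⟨z, rfl, fun i hi => hz i (by omega)⟩

attribute [local instance] Classical.propDecidable

noncomputable def rnk (R : X → X → Prop) (h : ℕ) (x : X) : ℕ :=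
  Nat.findGreatest (fun n => SChain R n x) h

lemma rnk_spec (R : X → X → Prop) (h : ℕ) (x : X) : SChain R (rnk R h x) x := by
  show (fun n => SChain R n x) (Nat.findGreatest (fun n => SChain R n x) h)
  exact Nat.findGreatest_spec (P := fun n => SChain R n x) (Nat.zero_le h) (sChain_zero R x)

lemma rnk_le (R : X → X → Prop) (h : ℕ) (x : X) : rnk R h x ≤ h := by
  show Nat.findGreatest (fun n => SChain R n x) h ≤ h
  exact Nat.findGreatest_le h

lemma rnk_lt (hH : HeightLe R h) (x : X) : rnk R h x < h := by
  rcases lt_or_eq_of_le (rnk_le R h x) with h' | h'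
  · exact h'
  · exact absurd (h' ▸ rnk_spec R h x) (not_sChain_of_heightLe hH x)

lemma sChain_of_rtg {x y : X} (hxy : ReflTransGen R x y) {n : ℕ} (hc : SChain R n y) :
    SChain R n x := by
  rcases Nat.eq_zero_or_pos n with rfl | hn
  · exact sChain_zero R x
  obtain ⟨z, hz0, hz⟩ := hc
  refine ⟨fun i => if i = 0 then x else z i, by simp, fun i hi => ?_⟩
  rcases Nat.eq_zero_or_pos i with rfl | hipos
  · simp only [if_pos rfl, if_neg (by omega : (0:ℕ) + 1 ≠ 0)]
    have h01 := hz 0 hn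
    rw [hz0] at h01
    constructor
    · exact hxy.trans h01.1
    · intro hback
      exact h01.2 (hback.trans (hz0 ▸ hxy))
  · simp only [if_neg (by omega : i ≠ 0), if_neg (by omega : i + 1 ≠ 0)]
    exact hz i hi

lemma le_rnk {x : X} {n : ℕ} (hn : n ≤ h) (hc : SChain R n x) : n ≤ rnk R h x := by
  show n ≤ Nat.findGreatest (fun n => SChain R n x) h
  exact Nat.le_findGreatest (P := fun n => SChain R n x) hn hc

lemma rnk_le_of_rtg {x y : X} (hxy : ReflTransGen R x y) : rnk R h y ≤ rnk R h x :=
  le_rnk (rnk_le R h y) (sChain_of_rtg hxy (rnk_spec R h y))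

lemma rnk_lt_of_strict (hH : HeightLe R h) {x y : X} (hxy : ReflTransGen R x y)
    (hyx : ¬ ReflTransGen R y x) : rnk R h y < rnk R h x := by
  obtain ⟨z, hz0, hz⟩ := rnk_spec R h y
  have hchain : SChain R (rnk R h y + 1) x := by
    refine ⟨fun i => if i = 0 then x else z (i - 1), by simp, fun i hi => ?_⟩
    rcases Nat.eq_zero_or_pos i with rfl | hipos
    · simp only [if_pos rfl, if_neg (by omega : (0:ℕ) + 1 ≠ 0)]
      simpa [hz0] using ⟨hxy, hyx⟩
    · simp only [if_neg (by omega : i ≠ 0), if_neg (by omega : i + 1 ≠ 0)]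
      have : i - 1 + 1 = i := by omega
      have hstep := hz (i - 1) (by omega)
      rw [this] at hstep
      exact hstep
  have : rnk R h y + 1 ≤ rnk R h x :=
    le_rnk (by have := rnk_lt hH y; omega) hchain
  omega

lemma rtg_of_rnk_eq (hH : HeightLe R h) {x y : X} (hxy : ReflTransGen R x y)
    (heq : rnk R h x = rnk R h y) : ReflTransGen R y x := by
  by_contra hback
  have := rnk_lt_of_strict hH hxy hback
  omega

lemma mem_clusterOf_self (R : X → X → Prop) (x : X) : x ∈ clusterOf R x :=
  ⟨ReflTransGen.refl, ReflTransGen.refl⟩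

lemma clusterOf_eq_of_mem {x y : X} (hy : y ∈ clusterOf R x) :
    clusterOf R y = clusterOf R x := by
  obtain ⟨hxy, hyx⟩ := hy
  ext w
  exact ⟨fun ⟨h1, h2⟩ => ⟨hxy.trans h1, h2.trans hyx⟩,
    fun ⟨h1, h2⟩ => ⟨hyx.trans h1, h2.trans hxy⟩⟩

lemma rnk_eq_of_mem_clusterOf {x y : X} (hy : y ∈ clusterOf R x) :
    rnk R h y = rnk R h x :=
  le_antisymm (rnk_le_of_rtg hy.1) (rnk_le_of_rtg hy.2)

lemma mem_clusterOf_of_rnk_eq (hH : HeightLe R h) {x y : X} (hxy : ReflTransGen R x y)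
    (heq : rnk R h x = rnk R h y) : y ∈ clusterOf R x :=
  ⟨hxy, rtg_of_rnk_eq hH hxy heq⟩


end rank

section prod
variable {A B X Y : Type*} {R : A → X → X → Prop} {S : B → Y → Y → Prop}

lemma rtg_lift_fst {x x' : X} (h : ReflTransGen (unionRel R) x x') (y : Y) :
    ReflTransGen (unionRel (prodRel R S)) (x, y) (x', y) := by
  induction h with
  | refl => exact ReflTransGen.refl
  | tail _ hstep ih =>
    obtain ⟨a, ha⟩ := hstep
    exact ih.tail ⟨Sum.inl a, ha, rfl⟩

lemma rtg_lift_snd {y y' : Y} (h : ReflTransGen (unionRel S) y y') (x : X) :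
    ReflTransGen (unionRel (prodRel R S)) (x, y) (x, y') := by
  induction h with
  | refl => exact ReflTransGen.refl
  | tail _ hstep ih =>
    obtain ⟨b, hb⟩ := hstep
    exact ih.tail ⟨Sum.inr b, rfl, hb⟩

lemma rtg_prod_iff {p q : X × Y} :
    ReflTransGen (unionRel (prodRel R S)) p q ↔
      ReflTransGen (unionRel R) p.1 q.1 ∧ ReflTransGen (unionRel S) p.2 q.2 := by
  constructor
  · intro hpq
    induction hpq with
    | refl => exact ⟨ReflTransGen.refl, ReflTransGen.refl⟩
    | tail _ hstep ih =>
      obtain ⟨ab, hab⟩ := hstep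
      cases ab with
      | inl a =>
        obtain ⟨h1, h2⟩ := hab
        exact ⟨ih.1.tail ⟨a, h1⟩, h2 ▸ ih.2⟩
      | inr b =>
        obtain ⟨h1, h2⟩ := hab
        exact ⟨h1 ▸ ih.1, ih.2.tail ⟨b, h2⟩⟩
  · rintro ⟨hx, hy⟩
    exact (rtg_lift_fst hx p.2).trans (rtg_lift_snd hy q.1)

lemma clusterOf_prod (x : X) (y : Y) :
    clusterOf (unionRel (prodRel R S)) (x, y) =
      (clusterOf (unionRel R) x) ×ˢ (clusterOf (unionRel S) y) := by
  ext ⟨x', y'⟩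
  simp only [clusterOf, Set.mem_setOf_eq, Set.mem_prod, rtg_prod_iff]
  tauto

end prod

section height

lemma schain_extract {W : Type*} (T : W → W → Prop) (n : ℕ) (w : ℕ → W)
    (hfw : ∀ i j, i ≤ j → j ≤ n → ReflTransGen T (w i) (w j))
    (Sx : Finset ℕ)
    (hSx : ∀ i ∈ Sx, i < n ∧ ¬ ReflTransGen T (w (i + 1)) (w i)) :
    ∃ x, SChain T Sx.card x := by
  rcases Nat.eq_zero_or_pos Sx.card with h0 | hpos
  · exact ⟨w 0, h0 ▸ sChain_zero T (w 0)⟩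
  set s := Sx.card with hs
  let φ : Fin s ≃o Sx := Sx.orderIsoOfFin hs.symm
  let cidx : ℕ → ℕ := fun t => if ht : t < s then (φ ⟨t, ht⟩ : ℕ) else (φ ⟨s - 1, by omega⟩ : ℕ) + 1
  have hmem : ∀ t (ht : t < s), ((φ ⟨t, ht⟩ : Sx) : ℕ) ∈ Sx := fun t ht => (φ ⟨t, ht⟩).2
  have hmono : ∀ t t' (ht : t < s) (ht' : t' < s), t < t' →
      ((φ ⟨t, ht⟩ : Sx) : ℕ) < ((φ ⟨t', ht'⟩ : Sx) : ℕ) := by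
    intro t t' ht ht' hlt
    have : (φ ⟨t, ht⟩ : Sx) < φ ⟨t', ht'⟩ := φ.strictMono (show (⟨t, ht⟩ : Fin s) < ⟨t', ht'⟩ from hlt)
    exact this
  refine ⟨w (cidx 0), fun t => w (cidx t), rfl, fun t ht => ?_⟩
  have hts : t < s := ht
  have hidxt : cidx t = (φ ⟨t, hts⟩ : ℕ) := dif_pos hts
  have hmemt := hmem t hts
  have hlt_n : (φ ⟨t, hts⟩ : ℕ) < n := (hSx _ hmemt).1
  have hback : ¬ ReflTransGen T (w ((φ ⟨t, hts⟩ : ℕ) + 1)) (w (φ ⟨t, hts⟩ : ℕ)) := (hSx _ hmemt).2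
  show ReflTransGen T (w (cidx t)) (w (cidx (t + 1))) ∧
    ¬ ReflTransGen T (w (cidx (t + 1))) (w (cidx t))
  rcases Nat.lt_or_ge (t + 1) s with ht1 | ht1
  · have hidxt1 : cidx (t + 1) = (φ ⟨t + 1, ht1⟩ : ℕ) := dif_pos ht1
    have hlt : (φ ⟨t, hts⟩ : ℕ) < (φ ⟨t + 1, ht1⟩ : ℕ) := hmono t (t + 1) hts ht1 (by omega)
    have hn1 : (φ ⟨t + 1, ht1⟩ : ℕ) ≤ n := le_of_lt (hSx _ (hmem (t + 1) ht1)).1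
    rw [hidxt, hidxt1]
    constructor
    · exact hfw _ _ (le_of_lt hlt) hn1
    · intro hb
      exact hback ((hfw _ _ (by omega) hn1).trans hb)
  · have hteq : t = s - 1 := by omega
    have hidxt1 : cidx (t + 1) = (φ ⟨s - 1, by omega⟩ : ℕ) + 1 := dif_neg (by omega)
    have hfin : (⟨s - 1, by omega⟩ : Fin s) = ⟨t, hts⟩ := by
      apply Fin.ext; simp [hteq]
    rw [hidxt, hidxt1, hfin]
    exact ⟨hfw _ _ (Nat.le_succ _) hlt_n, hback⟩

lemma heightLe_prod {A B X Y : Type*} [Nonempty X] [Nonempty Y]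
    {R : A → X → X → Prop} {S : B → Y → Y → Prop} {h₁ h₂ : ℕ}
    (H1 : HeightLe (unionRel R) h₁) (H2 : HeightLe (unionRel S) h₂) :
    HeightLe (unionRel (prodRel R S)) (h₁ + h₂) := by
  apply heightLe_of_not_sChain
  rintro p0 ⟨z, hz0, hz⟩
  set n := h₁ + h₂ with hn
  have fw : ∀ i d, i + d ≤ n → ReflTransGen (unionRel (prodRel R S)) (z i) (z (i + d)) := by
    intro i d
    induction d with
    | zero => exact fun _ => ReflTransGen.refl
    | succ d ih =>
      intro hle
      exact (ih (by omega)).trans (hz (i + d) (by omega)).1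
  have fw2 : ∀ i j, i ≤ j → j ≤ n → ReflTransGen (unionRel (prodRel R S)) (z i) (z j) := by
    intro i j hij hjn
    have := fw i (j - i) (by omega)
    rwa [Nat.add_sub_cancel' hij] at this
  set Sx := (Finset.range n).filter
    (fun i => ¬ ReflTransGen (unionRel R) (z (i + 1)).1 (z i).1) with hSxd
  set Sy := (Finset.range n).filter
    (fun i => ¬ ReflTransGen (unionRel S) (z (i + 1)).2 (z i).2) with hSyd
  have hcover : Finset.range n ⊆ Sx ∪ Sy := by
    intro i hi
    have hin : i < n := Finset.mem_range.mp hi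
    have hstrict := (hz i hin).2
    rw [rtg_prod_iff] at hstrict
    by_cases hbx : ReflTransGen (unionRel R) (z (i + 1)).1 (z i).1
    · exact Finset.mem_union_right _ (Finset.mem_filter.mpr ⟨hi, fun hby => hstrict ⟨hbx, hby⟩⟩)
    · exact Finset.mem_union_left _ (Finset.mem_filter.mpr ⟨hi, hbx⟩)
  have hSxcard : Sx.card < h₁ := by
    by_contra hle
    push_neg at hle
    obtain ⟨x0, hx0⟩ := schain_extract (unionRel R) n (fun i => (z i).1)
      (fun i j hij hjn => (rtg_prod_iff.mp (fw2 i j hij hjn)).1) Sx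
      (fun i hi => ⟨Finset.mem_range.mp (Finset.mem_filter.mp hi).1,
        (Finset.mem_filter.mp hi).2⟩)
    exact not_sChain_of_heightLe H1 x0 (sChain_anti hle hx0)
  have hSycard : Sy.card < h₂ := by
    by_contra hle
    push_neg at hle
    obtain ⟨y0, hy0⟩ := schain_extract (unionRel S) n (fun i => (z i).2)
      (fun i j hij hjn => (rtg_prod_iff.mp (fw2 i j hij hjn)).2) Sy
      (fun i hi => ⟨Finset.mem_range.mp (Finset.mem_filter.mp hi).1,
        (Finset.mem_filter.mp hi).2⟩)
    exact not_sChain_of_heightLe H2 y0 (sChain_anti hle hy0)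
  have hcard : n ≤ Sx.card + Sy.card := by
    calc n = (Finset.range n).card := (Finset.card_range n).symm
      _ ≤ (Sx ∪ Sy).card := Finset.card_le_card hcover
      _ ≤ Sx.card + Sy.card := Finset.card_union_le _ _
  omega

end height

section prodfin

lemma tunable_prod_finite {A B Cτ Dτ : Type*} [Nonempty Cτ] [Nonempty Dτ] [Finite Dτ]
    (R' : A → Cτ → Cτ → Prop) (S' : B → Dτ → Dτ → Prop) (f : ℕ → ℕ) (hf : Monotone f)
    (N : ℕ) (hN : Nat.card Dτ ≤ N) (hT : Tunable R' f) :
    Tunable (prodRel R' S') (fun n => N * f (n ^ N)) := by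
  intro P hP hPfin
  classical
  set n := P.ncard with hn
  have hn1 : 1 ≤ n := by
    obtain ⟨V, hV, _⟩ := exists_cell hP (Classical.arbitrary (Cτ × Dτ))
    exact (Set.ncard_pos hPfin).mpr ⟨V, hV⟩
  have hcell : ∀ p : Cτ × Dτ, ∃ V, V ∈ P ∧ p ∈ V := by
    intro p; obtain ⟨V, hV, hp⟩ := exists_cell hP p; exact ⟨V, hV, hp⟩
  choose cellP hcellP hmemP using hcell
  haveI : Finite ↥P := hPfin.to_subtype
  set gP : Cτ → (Dτ → ↥P) := fun w d => ⟨cellP (w, d), hcellP (w, d)⟩ with hgP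
  have hWfin := (fibers_finite gP).1
  have hWcard : (fibers gP).ncard ≤ n ^ N := by
    calc (fibers gP).ncard ≤ Nat.card (Dτ → ↥P) := (fibers_finite gP).2
      _ = Nat.card ↥P ^ Nat.card Dτ := Nat.card_fun
      _ = n ^ Nat.card Dτ := by rw [Nat.card_coe_set_eq]
      _ ≤ n ^ N := Nat.pow_le_pow_right hn1 hN
  obtain ⟨U, hU, hUref, hUtun, hUfin, hUcard⟩ := hT (fibers gP) (fibers_isPartition gP) hWfin
  have hUcard' : U.ncard ≤ f (n ^ N) := le_trans hUcard (hf hWcard)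
  set Q : Set (Set (Cτ × Dτ)) := {q | ∃ u ∈ U, ∃ d : Dτ, q = u ×ˢ ({d} : Set Dτ)} with hQ
  have hQpart : IsPartition Q := by
    refine ⟨?_, ?_, ?_⟩
    · rintro q ⟨u, hu, d, rfl⟩
      obtain ⟨w, hw⟩ := hU.1 u hu
      exact ⟨(w, d), hw, rfl⟩
    · rintro q ⟨u, hu, d, rfl⟩ q' ⟨u', hu', d', rfl⟩ hne
      rw [Set.disjoint_left]
      rintro ⟨w, e⟩ ⟨hw, he⟩ ⟨hw', he'⟩
      simp only [Set.mem_singleton_iff] at he he'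
      have hd : d = d' := by rw [← he, he']
      have huu : u = u' := cell_unique hU hu hu' hw hw'
      exact hne (by rw [hd, huu])
    · ext ⟨w, d⟩
      simp only [Set.mem_univ, iff_true, Set.mem_sUnion]
      obtain ⟨u, hu, hw⟩ := exists_cell hU w
      exact ⟨u ×ˢ {d}, ⟨u, hu, d, rfl⟩, hw, rfl⟩
  have hQref : Refines Q P := by
    rintro q ⟨u, hu, d, rfl⟩
    obtain ⟨v, hv, huv⟩ := hUref u hu
    obtain ⟨gv, ⟨w₀, rfl⟩, rfl⟩ := hv
    refine ⟨cellP (w₀, d), hcellP _, ?_⟩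
    rintro ⟨w, e⟩ ⟨hw, he⟩
    simp only [Set.mem_singleton_iff] at he
    rw [he]
    have hgw : gP w = gP w₀ := huv hw
    have hc : cellP (w, d) = cellP (w₀, d) := congrArg Subtype.val (congrFun hgw d)
    rw [← hc]
    exact hmemP (w, d)
  have hQtun : TunedFrame (prodRel R' S') Q := by
    rintro (a | b) q₁ hq₁ q₂ hq₂ hex p hp
    · obtain ⟨u, hu, d, rfl⟩ := hq₁
      obtain ⟨u', hu', d', rfl⟩ := hq₂
      obtain ⟨⟨w, e⟩, ⟨hw, he⟩, ⟨w', e'⟩, ⟨hw', he'⟩, hR, hee⟩ := hex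
      simp only [Set.mem_singleton_iff] at he he'
      have hdd : d = d' := by rw [← he, ← he']; exact hee
      obtain ⟨pw, pe⟩ := p
      obtain ⟨hpw, hpe⟩ := hp
      simp only [Set.mem_singleton_iff] at hpe
      obtain ⟨w''', hw''', hR'⟩ := hUtun a u hu u' hu' ⟨w, hw, w', hw', hR⟩ pw hpw
      exact ⟨(w''', pe), ⟨hw''', by simp [hpe, hdd]⟩, hR', rfl⟩
    · obtain ⟨u, hu, d, rfl⟩ := hq₁
      obtain ⟨u', hu', d', rfl⟩ := hq₂
      obtain ⟨⟨w, e⟩, ⟨hw, he⟩, ⟨w', e'⟩, ⟨hw', he'⟩, hww, hS⟩ := hex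
      simp only [Set.mem_singleton_iff] at he he'
      have hww' : w = w' := hww
      have huu : u = u' := cell_unique hU hu hu' hw (by rw [hww']; exact hw')
      obtain ⟨pw, pe⟩ := p
      obtain ⟨hpw, hpe⟩ := hp
      simp only [Set.mem_singleton_iff] at hpe
      refine ⟨(pw, d'), ⟨huu ▸ hpw, rfl⟩, rfl, ?_⟩
      show S' b pe d'
      rw [hpe, ← he, ← he']
      exact hS
  haveI : Finite ↥U := hUfin.to_subtype
  have hQsub : Q ⊆ Set.range (fun p : ↥U × Dτ => (↑p.1 : Set Cτ) ×ˢ ({p.2} : Set Dτ)) := by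
    rintro q ⟨u, hu, d, rfl⟩
    exact ⟨(⟨u, hu⟩, d), rfl⟩
  obtain ⟨hQfin, hQcard⟩ := fibers_subset_range_ncard hQsub
  refine ⟨Q, hQpart, hQref, hQtun, hQfin, ?_⟩
  calc Q.ncard ≤ Nat.card (↥U × Dτ) := hQcard
    _ = U.ncard * Nat.card Dτ := by rw [Nat.card_prod, Nat.card_coe_set_eq]
    _ ≤ f (n ^ N) * N := Nat.mul_le_mul hUcard' hN
    _ = N * f (n ^ N) := Nat.mul_comm _ _

end prodfin

section palette

abbrev SigT (A : Type*) (n j : ℕ) : Type _ := Fin n × (A → Set (Fin j))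

noncomputable def GG (A : Type*) (f : ℕ → ℕ) (n j : ℕ) : ℕ :=
  f (Nat.card (SigT A n j))

abbrev ProfT (A : Type*) (f : ℕ → ℕ) (n j : ℕ) : Type _ :=
  (Fin (GG A f n j) → SigT A n j → Prop) ×
    (A → Fin (GG A f n j) → Fin (GG A f n j) → Prop)

abbrev NewT (A : Type*) (f : ℕ → ℕ) (n j : ℕ) : Type _ :=
  SigT A n j × ProfT A f n j × Fin (GG A f n j)

noncomputable def NK (A : Type*) (f : ℕ → ℕ) (n j : ℕ) : ℕ :=
  Nat.card (NewT A f n j)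

noncomputable def sB (A : Type*) (f : ℕ → ℕ) (n : ℕ) : ℕ → ℕ
  | 0 => 0
  | (k + 1) => sB A f n k + NK A f n (sB A f n k)

example (A : Type*) [Finite A] (n j : ℕ) : Finite (SigT A n j) := inferInstance
example (A : Type*) [Finite A] (f : ℕ → ℕ) (n j : ℕ) : Finite (NewT A f n j) := inferInstance

end palette



section main

theorem main_tunable {A X : Type*} [Finite A] [Nonempty X] (h : ℕ) (f : ℕ → ℕ)
    (hf : Monotone f) (R : A → X → X → Prop) (Hht : HeightLe (unionRel R) h)
    (Hcl : ∀ x : X, Tunable (fun a (p q : clusterOf (unionRel R) x) => R a p.1 q.1) f) :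
    Tunable R (fun n => sB A f n h) := by
  classical
  intro P hP hPfin
  set n := P.ncard with hndef
  have hn1 : 1 ≤ n := by
    obtain ⟨V, hV, _⟩ := exists_cell hP (Classical.arbitrary X)
    exact (Set.ncard_pos hPfin).mpr ⟨V, hV⟩
  have hcellex : ∀ x : X, ∃ V, V ∈ P ∧ x ∈ V := by
    intro x; obtain ⟨V, hV, hx⟩ := exists_cell hP x; exact ⟨V, hV, hx⟩
  choose cellP hcellP hmemP using hcellex
  have hcellP_unique : ∀ {V x}, V ∈ P → x ∈ V → V = cellP x :=
    fun {V x} hV hx => cell_unique hP hV (hcellP _) hx (hmemP _)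
  obtain ⟨ψ, hψ⟩ : ∃ ψ : Set X → Fin n, Set.InjOn ψ P :=
    exists_injOn_fin hPfin (le_of_eq rfl) (by omega)
  set vidx : X → Fin n := fun x => ψ (cellP x) with hvidx
  have hvidx_inj : ∀ {x y : X}, vidx x = vidx y → cellP x = cellP y :=
    fun {x y} hxy => hψ (hcellP x) (hcellP y) hxy
  have hf1 : 1 ≤ f 1 := by
    have x₀ := Classical.arbitrary X
    haveI : Nonempty (clusterOf (unionRel R) x₀) := ⟨⟨x₀, mem_clusterOf_self _ x₀⟩⟩
    have htriv : IsPartition ({Set.univ} : Set (Set (clusterOf (unionRel R) x₀))) := by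
      refine ⟨?_, ?_, ?_⟩
      · rintro U hU
        simp only [Set.mem_singleton_iff] at hU
        subst hU
        exact Set.univ_nonempty
      · rintro U hU V hV hne
        simp only [Set.mem_singleton_iff] at hU hV
        exact absurd (hU.trans hV.symm) hne
      · simp
    obtain ⟨Q, hQ, _, _, hQfin, hQcard⟩ := Hcl x₀ {Set.univ} htriv (Set.finite_singleton _)
    have hQne : Q.Nonempty := by
      obtain ⟨u, hu, _⟩ := exists_cell hQ (Classical.arbitrary _)
      exact ⟨u, hu⟩
    have h1 := (Set.ncard_pos hQfin).mpr hQne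
    rw [Set.ncard_singleton] at hQcard
    omega
  have hcard_sig_pos : ∀ j : ℕ, 1 ≤ Nat.card (SigT A n j) := by
    intro j
    haveI : Nonempty (Fin n) := ⟨⟨0, by omega⟩⟩
    exact Nat.card_pos
  have hGpos : ∀ j : ℕ, 0 < GG A f n j := by
    intro j
    have h2 : f 1 ≤ f (Nat.card (SigT A n j)) := hf (hcard_sig_pos j)
    have : GG A f n j = f (Nat.card (SigT A n j)) := rfl
    omega
  have hrkstep : ∀ (a : A) (x z : X), R a x z →
      rnk (unionRel R) h z ≤ rnk (unionRel R) h x :=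
    fun a x z hz => rnk_le_of_rtg (Relation.ReflTransGen.single ⟨a, hz⟩)
  have KEY : ∀ k : ℕ, ∃ c : X → Option ℕ,
      (∀ x, (c x).isSome ↔ rnk (unionRel R) h x < k) ∧
      (∀ x y v, c x = some v → c y = some v → cellP x = cellP y) ∧
      (∀ (a : A) (x y : X) (v : ℕ), c x = some v → c y = some v →
        {w : ℕ | ∃ z, R a x z ∧ c z = some w} = {w : ℕ | ∃ z, R a y z ∧ c z = some w}) ∧
      (∀ x v, c x = some v → v < sB A f n k) := by
    intro k
    induction k with
    | zero => exact ⟨fun _ => none, by simp, by simp, by simp, by simp⟩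
    | succ k ih =>
      obtain ⟨c, hc1, hc2, hc3, hc4⟩ := ih
      set rk : X → ℕ := rnk (unionRel R) h with hrk
      set j : ℕ := sB A f n k with hjdef
      set sig : X → SigT A n j := fun x =>
        (vidx x, fun a => {w : Fin j | ∃ z, R a x z ∧ c z = some w.val}) with hsigdef
      set isClu : Set X → Prop :=
        fun C => ∃ x, rk x = k ∧ clusterOf (unionRel R) x = C with hisClu
      have hdata : ∀ C : Set X, ∃ (Q : Set (Set ↥C)) (e : Set ↥C → Fin (GG A f n j)),
          isClu C → (IsPartition Q ∧
            TunedFrame (fun (a : A) (p q : ↥C) => R a ↑p ↑q) Q ∧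
            (∀ u ∈ Q, ∀ z ∈ u, ∀ z' ∈ u, sig (↑z : X) = sig (↑z' : X)) ∧
            Set.InjOn e Q) := by
        intro C
        by_cases hC : isClu C
        · obtain ⟨x₀, hx₀k, hx₀C⟩ := hC
          subst hx₀C
          set sigC : ↥(clusterOf (unionRel R) x₀) → SigT A n j := fun z => sig ↑z with hsigC
          obtain ⟨Q, hQpart, hQref, hQtun, hQfin, hQcard⟩ :=
            Hcl x₀ (fibers sigC) (fibers_isPartition sigC) (fibers_finite sigC).1
          have hQG : Q.ncard ≤ GG A f n j := le_trans hQcard (hf (fibers_finite sigC).2)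
          obtain ⟨e, he⟩ := exists_injOn_fin hQfin hQG (hGpos j)
          refine ⟨Q, e, fun _ => ⟨hQpart, hQtun, ?_, he⟩⟩
          intro u hu z hz z' hz'
          obtain ⟨v, hv, huv⟩ := hQref u hu
          obtain ⟨w, ⟨z₀, rfl⟩, rfl⟩ := hv
          have h1 : sigC z = sigC z₀ := huv hz
          have h2 : sigC z' = sigC z₀ := huv hz'
          exact h1.trans h2.symm
        · exact ⟨∅, fun _ => ⟨0, hGpos j⟩, fun hcc => absurd hcc hC⟩
      choose QC eC hQC using hdata
      have hcellex2 : ∀ (C : Set X) (z : ↥C), ∃ u, isClu C → (u ∈ QC C ∧ z ∈ u) := by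
        intro C z
        by_cases hC : isClu C
        · obtain ⟨u, hu, hz⟩ := exists_cell (hQC C hC).1 z
          exact ⟨u, fun _ => ⟨hu, hz⟩⟩
        · exact ⟨∅, fun hcc => absurd hcc hC⟩
      choose cellC hcellC using hcellex2
      set profC : Set X → ProfT A f n j := fun C =>
        (fun i σ => ∃ u ∈ QC C, eC C u = i ∧ ∃ z ∈ u, sig (↑z : X) = σ,
         fun a i i' => ∃ u ∈ QC C, ∃ u' ∈ QC C, eC C u = i ∧ eC C u' = i' ∧
           ∃ z ∈ u, ∃ z' ∈ u', R a ↑z ↑z') with hprofC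
      obtain ⟨M, ⟨φM⟩⟩ := Finite.exists_equiv_fin (NewT A f n j)
      have hM : NK A f n j = M := Nat.card_eq_of_equiv_fin φM
      set emb : NewT A f n j → Fin (NK A f n j) := fun t => Fin.cast hM.symm (φM t)
        with hembdef
      have hembinj : Function.Injective emb := by
        intro t t' htt
        rw [hembdef] at htt
        have hv := congrArg Fin.val htt
        rw [Fin.coe_cast, Fin.coe_cast] at hv
        exact φM.injective (Fin.ext hv)
      set ncolfun : (x : X) → (C : Set X) → (x ∈ C) → ℕ := fun x C hx =>
        j + (emb (sig x, profC C, eC C (cellC C ⟨x, hx⟩))).val with hncolfun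
      have ncol_congr : ∀ (x : X) (C C' : Set X) (hx : x ∈ C) (hx' : x ∈ C'),
          C = C' → ncolfun x C hx = ncolfun x C' hx' := by
        intro x C C' hx hx' hCC
        subst hCC
        rfl
      set c' : X → Option ℕ := fun x =>
        if rk x < k then c x
        else if rk x = k then
          some (ncolfun x (clusterOf (unionRel R) x) (mem_clusterOf_self _ x))
        else none with hc'def
      have hc'lt : ∀ x, rk x < k → c' x = c x := by
        intro x hx
        simp only [hc'def]
        rw [if_pos hx]
      have hc'eq : ∀ x, rk x = k →
          c' x = some (ncolfun x (clusterOf (unionRel R) x) (mem_clusterOf_self _ x)) := by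
        intro x hx
        simp only [hc'def]
        rw [if_neg (by omega), if_pos hx]
      have hc'gt : ∀ x, k < rk x → c' x = none := by
        intro x hx
        simp only [hc'def]
        rw [if_neg (by omega), if_neg (by omega)]
      have hmemclu : ∀ (a : A) (x z : X), R a x z → rk x = k → rk z = k →
          z ∈ clusterOf (unionRel R) x := by
        intro a x z hz hxk hzk
        exact mem_clusterOf_of_rnk_eq Hht (Relation.ReflTransGen.single ⟨a, hz⟩)
          (by rw [← hrk]; omega)
      have decode_lt : ∀ x v, c' x = some v → v < j → rk x < k ∧ c x = some v := by
        intro x v hv hvj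
        by_cases h1 : rk x < k
        · rw [hc'lt x h1] at hv
          exact ⟨h1, hv⟩
        by_cases h2 : rk x = k
        · rw [hc'eq x h2] at hv
          have hvv := (Option.some_injective _ hv).symm
          simp only [hncolfun] at hvv
          omega
        · rw [hc'gt x (by omega)] at hv
          exact absurd hv (by simp)
      have decode_eq : ∀ x v, c' x = some v → j ≤ v → rk x = k ∧
          v = ncolfun x (clusterOf (unionRel R) x) (mem_clusterOf_self _ x) := by
        intro x v hv hjv
        by_cases h1 : rk x < k
        · rw [hc'lt x h1] at hv
          have := hc4 x v hv
          omega
        by_cases h2 : rk x = k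
        · rw [hc'eq x h2] at hv
          exact ⟨h2, (Option.some_injective _ hv).symm⟩
        · rw [hc'gt x (by omega)] at hv
          exact absurd hv (by simp)
      have succ_old : ∀ (a : A) (x : X), rk x < k →
          {w : ℕ | ∃ z, R a x z ∧ c' z = some w} =
          {w : ℕ | ∃ z, R a x z ∧ c z = some w} := by
        intro a x hx
        ext w
        simp only [Set.mem_setOf_eq]
        constructor
        · rintro ⟨z, hz, hcz⟩
          exact ⟨z, hz, by rwa [hc'lt z (lt_of_le_of_lt (hrkstep a x z hz) hx)] at hcz⟩
        · rintro ⟨z, hz, hcz⟩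
          exact ⟨z, hz, by rwa [hc'lt z (lt_of_le_of_lt (hrkstep a x z hz) hx)]⟩
      have succ_formula : ∀ (a : A) (x : X), rk x = k →
          {w : ℕ | ∃ z, R a x z ∧ c' z = some w} =
          {w : ℕ | ∃ hw : w < j, (⟨w, hw⟩ : Fin j) ∈ (sig x).2 a} ∪
          {w : ℕ | ∃ (i' : Fin (GG A f n j)) (σ' : SigT A n j),
            (profC (clusterOf (unionRel R) x)).2 a
              (eC (clusterOf (unionRel R) x)
                (cellC (clusterOf (unionRel R) x) ⟨x, mem_clusterOf_self _ x⟩)) i' ∧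
            (profC (clusterOf (unionRel R) x)).1 i' σ' ∧
            w = j + (emb (σ', profC (clusterOf (unionRel R) x), i')).val} := by
        intro a x hxk
        have hCluX : isClu (clusterOf (unionRel R) x) := ⟨x, hxk, rfl⟩
        obtain ⟨hQpart, hQtun, hfib, hinj⟩ := hQC _ hCluX
        ext w
        simp only [Set.mem_setOf_eq, Set.mem_union]
        constructor
        · rintro ⟨z, hz, hcz⟩
          have hle : rk z ≤ rk x := hrkstep a x z hz
          have hcas : rk z < k ∨ rk z = k := by omega
          rcases hcas with hlt | heq
          · left
            rw [hc'lt z hlt] at hcz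
            have hwj : w < j := hc4 z w hcz
            refine ⟨hwj, ?_⟩
            try simp only [hsigdef]
            exact ⟨z, hz, hcz⟩
          · right
            have hzC : z ∈ clusterOf (unionRel R) x := hmemclu a x z hz hxk heq
            have hCz : clusterOf (unionRel R) z = clusterOf (unionRel R) x :=
              clusterOf_eq_of_mem hzC
            rw [hc'eq z heq] at hcz
            have hw : w = ncolfun z (clusterOf (unionRel R) x) hzC := by
              rw [← Option.some_injective _ hcz]
              exact ncol_congr z _ _ (mem_clusterOf_self _ z) hzC hCz
            refine ⟨eC _ (cellC _ ⟨z, hzC⟩), sig z, ?_, ?_, ?_⟩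
            · try simp only [hprofC]
              exact ⟨cellC _ ⟨x, mem_clusterOf_self _ x⟩,
                (hcellC _ _ hCluX).1, cellC _ ⟨z, hzC⟩, (hcellC _ _ hCluX).1,
                rfl, rfl, ⟨x, mem_clusterOf_self _ x⟩, (hcellC _ _ hCluX).2,
                ⟨z, hzC⟩, (hcellC _ _ hCluX).2, hz⟩
            · try simp only [hprofC]
              exact ⟨cellC _ ⟨z, hzC⟩, (hcellC _ _ hCluX).1, rfl,
                ⟨z, hzC⟩, (hcellC _ _ hCluX).2, rfl⟩
            · rw [hw]
        · rintro (⟨hwj, hmem⟩ | ⟨i', σ', hreach, hcellsig, hweq⟩)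
          · try simp only [hsigdef] at hmem
            obtain ⟨z, hz, hcz⟩ := hmem
            refine ⟨z, hz, ?_⟩
            have hzlt : rk z < k := by
              have := (hc1 z).mp (by rw [hcz]; rfl)
              omega
            rw [hc'lt z hzlt]
            exact hcz
          · try simp only [hprofC] at hreach hcellsig
            obtain ⟨u, hu, u', hu', heu, heu', zz, hzz, zz', hzz', hRzz⟩ := hreach
            have hux : u = cellC _ ⟨x, mem_clusterOf_self _ x⟩ :=
              hinj hu (hcellC _ _ hCluX).1 heu
            have hxmem : (⟨x, mem_clusterOf_self _ x⟩ :
                ↥(clusterOf (unionRel R) x)) ∈ u := by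
              rw [hux]
              exact (hcellC _ _ hCluX).2
            obtain ⟨b, hb, hRab⟩ :=
              hQtun a u hu u' hu' ⟨zz, hzz, zz', hzz', hRzz⟩ _ hxmem
            have hbk : rk (↑b : X) = k := by
              rw [hrk] at hxk ⊢
              rw [rnk_eq_of_mem_clusterOf b.2]
              exact hxk
            have hbC : clusterOf (unionRel R) (↑b : X) = clusterOf (unionRel R) x :=
              clusterOf_eq_of_mem b.2
            refine ⟨↑b, hRab, ?_⟩
            rw [hc'eq _ hbk]
            congr 1
            rw [ncol_congr (↑b : X) _ _ _ b.2 hbC]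
            have hcb : cellC _ (⟨↑b, b.2⟩ : ↥(clusterOf (unionRel R) x)) = u' := by
              have h1 := hcellC _ (⟨↑b, b.2⟩ : ↥(clusterOf (unionRel R) x)) hCluX
              exact cell_unique hQpart h1.1 hu' h1.2 hb
            obtain ⟨u'', hu'', heu'', z₂, hz₂, hsz₂⟩ := hcellsig
            have huu : u'' = u' := hinj hu'' hu' (heu''.trans heu'.symm)
            have hsigb : sig (↑b : X) = σ' := by
              rw [← hsz₂]
              exact hfib u' hu' b hb z₂ (huu ▸ hz₂)
            rw [hweq]
            simp only [hncolfun]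
            rw [hsigb, hcb, heu']
      refine ⟨c', ?_, ?_, ?_, ?_⟩
      · intro x
        by_cases h1 : rk x < k
        · rw [hc'lt x h1, hc1]
          constructor <;> intro <;> omega
        by_cases h2 : rk x = k
        · rw [hc'eq x h2]
          exact ⟨fun _ => by omega, fun _ => rfl⟩
        · rw [hc'gt x (by omega)]
          exact ⟨fun hh => by simp at hh, fun hh => absurd hh (by omega)⟩
      · intro x y v hx hy
        rcases Nat.lt_or_ge v j with hvj | hvj
        · obtain ⟨_, hcx⟩ := decode_lt x v hx hvj
          obtain ⟨_, hcy⟩ := decode_lt y v hy hvj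
          exact hc2 x y v hcx hcy
        · obtain ⟨hxk, hvx⟩ := decode_eq x v hx hvj
          obtain ⟨hyk, hvy⟩ := decode_eq y v hy hvj
          simp only [hncolfun] at hvx hvy
          have hval : (emb (sig x, profC (clusterOf (unionRel R) x),
              eC (clusterOf (unionRel R) x) (cellC (clusterOf (unionRel R) x)
                ⟨x, mem_clusterOf_self _ x⟩))).val =
              (emb (sig y, profC (clusterOf (unionRel R) y),
              eC (clusterOf (unionRel R) y) (cellC (clusterOf (unionRel R) y)
                ⟨y, mem_clusterOf_self _ y⟩))).val := by omega
          have htup := hembinj (Fin.ext hval)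
          have h1 : sig x = sig y := congrArg Prod.fst htup
          have h2 : vidx x = vidx y := congrArg Prod.fst h1
          exact hvidx_inj h2
      · intro a x y v hx hy
        rcases Nat.lt_or_ge v j with hvj | hvj
        · obtain ⟨hxlt, hcx⟩ := decode_lt x v hx hvj
          obtain ⟨hylt, hcy⟩ := decode_lt y v hy hvj
          rw [succ_old a x hxlt, succ_old a y hylt]
          exact hc3 a x y v hcx hcy
        · obtain ⟨hxk, hvx⟩ := decode_eq x v hx hvj
          obtain ⟨hyk, hvy⟩ := decode_eq y v hy hvj
          simp only [hncolfun] at hvx hvy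
          have hval : (emb (sig x, profC (clusterOf (unionRel R) x),
              eC (clusterOf (unionRel R) x) (cellC (clusterOf (unionRel R) x)
                ⟨x, mem_clusterOf_self _ x⟩))).val =
              (emb (sig y, profC (clusterOf (unionRel R) y),
              eC (clusterOf (unionRel R) y) (cellC (clusterOf (unionRel R) y)
                ⟨y, mem_clusterOf_self _ y⟩))).val := by omega
          have htup := hembinj (Fin.ext hval)
          have h1 : sig x = sig y := congrArg Prod.fst htup
          have h2 : profC (clusterOf (unionRel R) x) = profC (clusterOf (unionRel R) y) :=
            congrArg (fun t => t.2.1) htup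
          have h3 : eC (clusterOf (unionRel R) x) (cellC (clusterOf (unionRel R) x)
                ⟨x, mem_clusterOf_self _ x⟩) =
              eC (clusterOf (unionRel R) y) (cellC (clusterOf (unionRel R) y)
                ⟨y, mem_clusterOf_self _ y⟩) :=
            congrArg (fun t => t.2.2) htup
          rw [succ_formula a x hxk, succ_formula a y hyk, h1, h2, h3]
      · intro x v hv
        rcases Nat.lt_or_ge v j with hvj | hvj
        · have : sB A f n (k + 1) = j + NK A f n j := rfl
          omega
        · obtain ⟨hxk, hvx⟩ := decode_eq x v hv hvj
          simp only [hncolfun] at hvx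
          have hlt := (emb (sig x, profC (clusterOf (unionRel R) x),
              eC (clusterOf (unionRel R) x) (cellC (clusterOf (unionRel R) x)
                ⟨x, mem_clusterOf_self _ x⟩))).isLt
          have : sB A f n (k + 1) = j + NK A f n j := rfl
          omega
  -- conclude
  obtain ⟨c, hc1, hc2, hc3, hc4⟩ := KEY h
  have hall : ∀ x, (c x).isSome := fun x => (hc1 x).mpr (rnk_lt Hht x)
  have hcsome : ∀ x, c x = some ((c x).get (hall x)) := fun x => (Option.some_get (hall x)).symm
  set cF : X → Fin (sB A f n h) := fun x =>
    ⟨(c x).get (hall x), hc4 x _ (hcsome x)⟩ with hcF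
  have hcFval : ∀ x, c x = some ((cF x) : ℕ) := fun x => hcsome x
  have hcF_inj : ∀ {x y}, cF x = cF y → c x = c y := by
    intro x y hxy
    rw [hcFval x, hcFval y, congrArg Fin.val hxy]
  obtain ⟨Q, hQ1, hQ2, hQ3, hQ4, hQ5⟩ := coloring_to_tuned R P hP cF
    (by
      intro x y hxy V hV hxV
      have hcc : c x = c y := hcF_inj hxy
      have := hc2 x y _ (hcFval x) (by rw [← hcc]; exact hcFval x)
      have hVx : V = cellP x := hcellP_unique hV hxV
      rw [hVx, this]
      exact hmemP y)
    (by
      intro a x y hxy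
      have hcc : c x = c y := hcF_inj hxy
      have hsets := hc3 a x y _ (hcFval x) (by rw [← hcc]; exact hcFval x)
      ext w
      simp only [Set.mem_setOf_eq]
      constructor
      · rintro ⟨z, hz, rfl⟩
        have : ((cF z) : ℕ) ∈ {w : ℕ | ∃ z, R a x z ∧ c z = some w} := ⟨z, hz, hcFval z⟩
        rw [hsets] at this
        obtain ⟨z', hz', hcz'⟩ := this
        refine ⟨z', hz', ?_⟩
        apply Fin.ext
        have := (hcFval z').symm.trans hcz'
        exact Option.some_injective _ this
      · rintro ⟨z, hz, rfl⟩
        have : ((cF z) : ℕ) ∈ {w : ℕ | ∃ z, R a y z ∧ c z = some w} := ⟨z, hz, hcFval z⟩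
        rw [← hsets] at this
        obtain ⟨z', hz', hcz'⟩ := this
        refine ⟨z', hz', ?_⟩
        apply Fin.ext
        have := (hcFval z').symm.trans hcz'
        exact Option.some_injective _ this)
  refine ⟨Q, hQ1, hQ2, hQ3, hQ4, ?_⟩
  calc Q.ncard ≤ Nat.card (Fin (sB A f n h)) := hQ5
    _ = sB A f n h := Nat.card_eq_of_equiv_fin (Equiv.refl _)

end main

end S5

/-- Bounded-cluster criterion, 'if' direction, semantic form: given `h₁ h₂ N` and a
monotone `f`, there is a single `t` such that the product `F × G` of any frame `F` of
height `≤ h₁` whose cluster-restrictions are all `f`-tunable with any frame `G` of height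
`≤ h₂` all of whose clusters have at most `N` elements is `t`-tunable. -/
theorem stmt5 {A B : Type*} [Finite A] [Finite B] (h₁ h₂ N : ℕ)
    (f : ℕ → ℕ) (hf : Monotone f) :
    ∃ t : ℕ → ℕ, ∀ (X Y : Type u) [Nonempty X] [Nonempty Y]
      (R : A → X → X → Prop) (S : B → Y → Y → Prop),
      HeightLe (unionRel R) h₁ →
      (∀ x : X, Tunable (fun a (p q : clusterOf (unionRel R) x) => R a p.1 q.1) f) →
      HeightLe (unionRel S) h₂ →
      (∀ y : Y, (clusterOf (unionRel S) y).Finite ∧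
        (clusterOf (unionRel S) y).ncard ≤ N) →
      Tunable (prodRel R S) t := by
  classical
  refine ⟨fun m => S5.sB (A ⊕ B) (fun q => N * f (q ^ N)) m (h₁ + h₂), ?_⟩
  intro X Y _nx _ny R S hH1 hClF hH2 hClG
  have hfN : Monotone (fun q => N * f (q ^ N)) := fun m m' hm =>
    Nat.mul_le_mul_left _ (hf (Nat.pow_le_pow_left hm N))
  apply S5.main_tunable (h₁ + h₂) _ hfN (prodRel R S) (S5.heightLe_prod hH1 hH2)
  rintro ⟨x, y⟩
  have hCeq := S5.clusterOf_prod (R := R) (S := S) x y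
  haveI : Nonempty ↥(clusterOf (unionRel R) x) := ⟨⟨x, S5.mem_clusterOf_self _ x⟩⟩
  haveI : Nonempty ↥(clusterOf (unionRel S) y) := ⟨⟨y, S5.mem_clusterOf_self _ y⟩⟩
  haveI : Finite ↥(clusterOf (unionRel S) y) := (hClG y).1.to_subtype
  have hcard : Nat.card ↥(clusterOf (unionRel S) y) ≤ N := by
    rw [Nat.card_coe_set_eq]; exact (hClG y).2
  have hprod := S5.tunable_prod_finite
    (fun a (p q : clusterOf (unionRel R) x) => R a p.1 q.1)
    (fun b (p q : clusterOf (unionRel S) y) => S b p.1 q.1)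
    f hf N hcard (hClF x)
  let e : (↥(clusterOf (unionRel R) x) × ↥(clusterOf (unionRel S) y)) ≃
      ↥(clusterOf (unionRel (prodRel R S)) (x, y)) :=
    (Equiv.Set.prod _ _).symm.trans (Equiv.setCongr hCeq.symm)
  have heval : ∀ z : (↥(clusterOf (unionRel R) x) × ↥(clusterOf (unionRel S) y)),
      ((e z : (X × Y))) = ((z.1 : X), (z.2 : Y)) := fun z => rfl
  refine S5.tunable_of_equiv e _ _ ?_ _ hprod
  rintro (a | b) z w
  · show (R a (z.1 : X) (w.1 : X) ∧ z.2 = w.2) ↔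
      prodRel R S (Sum.inl a) (e z : (X × Y)) (e w : (X × Y))
    rw [heval z, heval w]
    show (R a (z.1 : X) (w.1 : X) ∧ z.2 = w.2) ↔
      (R a (z.1 : X) (w.1 : X) ∧ ((z.2 : Y) = (w.2 : Y)))
    constructor
    · rintro ⟨hr, hz⟩; exact ⟨hr, congrArg Subtype.val hz⟩
    · rintro ⟨hr, hz⟩; exact ⟨hr, Subtype.ext hz⟩
  · show ((z.1 : ↥(clusterOf (unionRel R) x)) = w.1 ∧ S b (z.2 : Y) (w.2 : Y)) ↔
      prodRel R S (Sum.inr b) (e z : (X × Y)) (e w : (X × Y))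
    rw [heval z, heval w]
    show ((z.1 : ↥(clusterOf (unionRel R) x)) = w.1 ∧ S b (z.2 : Y) (w.2 : Y)) ↔
      (((z.1 : X) = (w.1 : X)) ∧ S b (z.2 : Y) (w.2 : Y))
    constructor
    · rintro ⟨hz, hs⟩; exact ⟨congrArg Subtype.val hz, hs⟩
    · rintro ⟨hz, hs⟩; exact ⟨Subtype.ext hz, hs⟩
end

section
/- Let h₁, h₂ < ω and let f:ℕ→ℕ be monotone. Let 𝓕 and 𝓖 be classes of frames of heights ≤ h₁ and ≤ h₂ respectively, such that every cluster-restriction of every frame in 𝓕 and every cluster-restriction of every frame in 𝓖 is f-tunable. If there is m < ω such that for all F∈𝓕, G∈𝓖 the union of all relations of F*×G* satisfies RP_m, then the class 𝓕×𝓖 = {F×G : F∈𝓕, G∈𝓖} is uniformly tunable. -/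
universe u

open Set Relation

section Colorings

variable {A Z : Type*}

def IsPartitionOn (W : Set Z) (P : Set (Set Z)) : Prop :=
  (∀ U ∈ P, U.Nonempty) ∧ (∀ U ∈ P, ∀ V ∈ P, U ≠ V → Disjoint U V) ∧ ⋃₀ P = W

-- `TunableOn univ R f` unfolds to `Tunable R f`.
def TunableOn (W : Set Z) (R : A → Z → Z → Prop) (f : ℕ → ℕ) : Prop :=
  ∀ P : Set (Set Z), IsPartitionOn W P → P.Finite →
    ∃ Q : Set (Set Z), IsPartitionOn W Q ∧ Refines Q P ∧ TunedFrame R Q ∧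
      Q.Finite ∧ Q.ncard ≤ f P.ncard

open Classical in
noncomputable def partOf (P : Set (Set Z)) (z : Z) : Option P :=
  if h : ∃ U ∈ P, z ∈ U then some ⟨h.choose, h.choose_spec.1⟩ else none

def RefinesOn {β γ : Type*} (W : Set Z) (c : Z → β) (κ : Z → γ) : Prop :=
  ∀ z ∈ W, ∀ z' ∈ W, c z = c z' → κ z = κ z'

def IsTunedColoring {β : Type*} (R : A → Z → Z → Prop) (W : Set Z) (c : Z → β) : Prop :=
  ∀ a, ∀ z ∈ W, ∀ z' ∈ W, c z = c z' → ∀ w ∈ W, R a z w → ∃ w' ∈ W, c w' = c w ∧ R a z' w'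

def colorClasses {β : Type*} (W : Set Z) (c : Z → β) : Set (Set Z) :=
  (fun b => {z ∈ W | c z = b}) '' (c '' W)

variable {W : Set Z} {P : Set (Set Z)}

theorem mem_of_partOf_eq_some {z : Z} {U : P} (h : partOf P z = some U) : z ∈ U.1 := by
  unfold partOf at h
  split_ifs at h with hz
  cases h
  exact hz.choose_spec.2

theorem IsPartitionOn.partOf_eq_some (hP : IsPartitionOn W P) {U : Set Z} (hU : U ∈ P) {z : Z}
    (hz : z ∈ U) : partOf P z = some ⟨U, hU⟩ := by
  have hex : ∃ V ∈ P, z ∈ V := ⟨U, hU, hz⟩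
  obtain ⟨V, hV⟩ : ∃ V, partOf P z = some V := by simp [partOf, hex]
  rw [hV, Option.some_inj, Subtype.ext_iff]
  by_contra hne
  exact disjoint_left.mp (hP.2.1 _ V.2 _ hU hne) (mem_of_partOf_eq_some hV) hz

theorem IsPartitionOn.exists_partOf_eq (hP : IsPartitionOn W P) {z : Z} (hz : z ∈ W) :
    ∃ U, ∃ hU : U ∈ P, z ∈ U ∧ partOf P z = some ⟨U, hU⟩ := by
  rw [← hP.2.2, mem_sUnion] at hz
  obtain ⟨U, hU, hzU⟩ := hz
  exact ⟨U, hU, hzU, hP.partOf_eq_some hU hzU⟩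

theorem IsPartitionOn.image_partOf (hP : IsPartitionOn W P) : partOf P '' W = range some := by
  ext o
  constructor
  · rintro ⟨z, hz, rfl⟩
    obtain ⟨U, hU, -, hzU⟩ := hP.exists_partOf_eq hz
    exact ⟨_, hzU.symm⟩
  · rintro ⟨⟨U, hU⟩, rfl⟩
    obtain ⟨z, hz⟩ := hP.1 U hU
    exact ⟨z, hP.2.2 ▸ mem_sUnion_of_mem hz hU, hP.partOf_eq_some hU hz⟩

theorem IsPartitionOn.ncard_image_partOf (hP : IsPartitionOn W P) :
    (partOf P '' W).ncard = P.ncard := by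
  rw [hP.image_partOf, ncard_range_of_injective (Option.some_injective _), Nat.card_coe_set_eq]

theorem isPartitionOn_colorClasses {β : Type*} (c : Z → β) :
    IsPartitionOn W (colorClasses W c) := by
  refine ⟨?_, ?_, ?_⟩
  · rintro _ ⟨_, ⟨z, hz, rfl⟩, rfl⟩
    exact ⟨z, hz, rfl⟩
  · rintro _ ⟨b, -, rfl⟩ _ ⟨b', -, rfl⟩ hne
    refine disjoint_left.mpr fun z hz hz' => hne ?_
    rw [← hz.2, ← hz'.2]
  · ext z
    simp only [colorClasses, sUnion_image, mem_iUnion, mem_ofPred_eq, mem_image]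
    exact ⟨fun ⟨_, _, hz, _⟩ => hz, fun hz => ⟨c z, ⟨z, hz, rfl⟩, hz, rfl⟩⟩

theorem ncard_colorClasses {β : Type*} (c : Z → β) :
    (colorClasses W c).ncard = (c '' W).ncard := by
  refine InjOn.ncard_image ?_
  rintro _ ⟨z, hz, rfl⟩ _ ⟨z', hz', rfl⟩ h
  exact (h.subset ⟨hz, rfl⟩ : z ∈ {w ∈ W | c w = c z'}).2

theorem IsTunedColoring.tunedFrame {β : Type*} {R : A → Z → Z → Prop} {c : Z → β}
    (hc : IsTunedColoring R W c) : TunedFrame R (colorClasses W c) := by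
  rintro a _ ⟨_, ⟨z₀, -, rfl⟩, rfl⟩ _ ⟨_, ⟨w₀, -, rfl⟩, rfl⟩ ⟨z, ⟨hz, hcz⟩, w, ⟨hw, hcw⟩, hzw⟩
    z' ⟨hz', hcz'⟩
  obtain ⟨w', hw', hcw', hzw'⟩ := hc a z hz z' hz' (hcz.trans hcz'.symm) w hw hzw
  exact ⟨w', ⟨hw', hcw'.trans hcw⟩, hzw'⟩

theorem RefinesOn.refines_colorClasses {β : Type*} {c : Z → β} (hP : IsPartitionOn W P)
    (hc : RefinesOn W c (partOf P)) : Refines (colorClasses W c) P := by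
  rintro _ ⟨_, ⟨z₀, hz₀, rfl⟩, rfl⟩
  obtain ⟨U, hU, -, hzU⟩ := hP.exists_partOf_eq hz₀
  refine ⟨U, hU, fun z ⟨hz, hcz⟩ => mem_of_partOf_eq_some (U := ⟨U, hU⟩) ?_⟩
  rw [hc z hz z₀ hz₀ hcz, hzU]

theorem tunableOn_of_forall_coloring {R : A → Z → Z → Prop} {f : ℕ → ℕ}
    (h : ∀ P, IsPartitionOn W P → P.Finite → ∃ (β : Type*) (c : Z → β) (s : Set β), s.Finite ∧
      s.ncard ≤ f P.ncard ∧ MapsTo c W s ∧ RefinesOn W c (partOf P) ∧ IsTunedColoring R W c) :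
    TunableOn W R f := by
  intro P hP hPfin
  obtain ⟨β, c, s, hs, hcard, hcs, hcP, hc⟩ := h P hP hPfin
  refine ⟨colorClasses W c, isPartitionOn_colorClasses c, hcP.refines_colorClasses hP,
    hc.tunedFrame, (hs.subset hcs.image_subset).image _, ?_⟩
  rw [ncard_colorClasses]
  exact (ncard_le_ncard hcs.image_subset hs).trans hcard

theorem TunableOn.exists_coloring {γ : Type*} {R : A → Z → Z → Prop} {f : ℕ → ℕ}
    (h : TunableOn W R f) {κ : Z → γ} (hκ : (κ '' W).Finite) :
    ∃ c : Z → ℕ, (∀ z ∈ W, c z < f (κ '' W).ncard) ∧ RefinesOn W c κ ∧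
      IsTunedColoring R W c := by
  obtain ⟨Q, hQ, hQP, hQt, hQfin, hQcard⟩ :=
    h _ (isPartitionOn_colorClasses κ) (hκ.image _)
  rw [ncard_colorClasses] at hQcard
  have : Finite Q := hQfin
  let e := Finite.equivFin Q
  let c : Z → ℕ := fun z => (partOf Q z).elim 0 fun V => e V
  have hc : ∀ z (V : Q), partOf Q z = some V → c z = e V := fun z V h => by simp [c, h]
  have hc_inj : ∀ z ∈ W, ∀ z' ∈ W, c z = c z' → partOf Q z = partOf Q z' := by
    intro z hz z' hz' hzz'
    obtain ⟨V, hV, -, hzV⟩ := hQ.exists_partOf_eq hz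
    obtain ⟨V', hV', -, hzV'⟩ := hQ.exists_partOf_eq hz'
    rw [hc _ _ hzV, hc _ _ hzV', Fin.val_inj, e.apply_eq_iff_eq] at hzz'
    rw [hzV, hzV', hzz']
  refine ⟨c, fun z hz => ?_, fun z hz z' hz' hzz' => ?_, fun a z hz z' hz' hzz' w hw hzw => ?_⟩
  · obtain ⟨V, hV, -, hzV⟩ := hQ.exists_partOf_eq hz
    rw [hc _ _ hzV]
    exact (e ⟨V, hV⟩).2.trans_le (by rwa [Nat.card_coe_set_eq])
  · obtain ⟨V, hV, hzV, hpz⟩ := hQ.exists_partOf_eq hz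
    have hz'V : z' ∈ V := mem_of_partOf_eq_some ((hc_inj z hz z' hz' hzz').symm.trans hpz)
    obtain ⟨_, ⟨_, ⟨z₀, -, rfl⟩, rfl⟩, hVU⟩ := hQP V hV
    exact (hVU hzV).2.trans (hVU hz'V).2.symm
  · obtain ⟨V, hV, hzV, hpz⟩ := hQ.exists_partOf_eq hz
    obtain ⟨Vw, hVw, hwV, hpw⟩ := hQ.exists_partOf_eq hw
    have hz'V : z' ∈ V := mem_of_partOf_eq_some ((hc_inj z hz z' hz' hzz').symm.trans hpz)
    obtain ⟨w', hw'V, hzw'⟩ := hQt a V hV Vw hVw ⟨z, hzV, w, hwV, hzw⟩ z' hz'V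
    have hw' : w' ∈ W := hQ.2.2 ▸ mem_sUnion_of_mem hw'V hVw
    exact ⟨w', hw', by rw [hc _ _ hpw, hc _ _ (hQ.partOf_eq_some hVw hw'V)], hzw'⟩

end Colorings

section Transport

variable {A A' Z Z' : Type*} {W : Set Z}

theorem tunableOn_empty {R : A → Z → Z → Prop} (f : ℕ → ℕ) : TunableOn (∅ : Set Z) R f :=
  tunableOn_of_forall_coloring fun _ _ _ =>
    ⟨Unit, fun _ => (), ∅, finite_empty, by simp, mapsTo_empty _ _, by simp [RefinesOn],
      by simp [IsTunedColoring]⟩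

theorem TunableOn.image {R : A → Z → Z → Prop} {R' : A' → Z' → Z' → Prop} {f : ℕ → ℕ}
    (h : TunableOn W R f) {e : Z → Z'} (he : Function.Injective e) (σ : A' → A)
    (hR : ∀ a z w, R' a (e z) (e w) ↔ R (σ a) z w) : TunableOn (e '' W) R' f := by
  refine tunableOn_of_forall_coloring fun P hP hPfin => ?_
  have : Finite P := hPfin
  obtain ⟨c, hcb, hcP, hc⟩ := h.exists_coloring (κ := partOf P ∘ e) (toFinite _)
  rw [image_comp, hP.ncard_image_partOf] at hcb
  let c' := Function.extend e c fun _ => 0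
  have hc' : ∀ z, c' (e z) = c z := he.extend_apply c _
  refine ⟨ℕ, c', Iio (f P.ncard), finite_Iio _, (ncard_Iio_nat _).le, ?_, ?_, ?_⟩
  · rintro _ ⟨z, hz, rfl⟩
    exact (hc' z).trans_lt (hcb z hz)
  · rintro _ ⟨z, hz, rfl⟩ _ ⟨z', hz', rfl⟩ hzz'
    rw [hc', hc'] at hzz'
    exact hcP z hz z' hz' hzz'
  · rintro a _ ⟨z, hz, rfl⟩ _ ⟨z', hz', rfl⟩ hzz' _ ⟨w, hw, rfl⟩ hzw
    rw [hc', hc'] at hzz'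
    obtain ⟨w', hw', hcw', hzw'⟩ := hc (σ a) z hz z' hz' hzz' w hw ((hR a z w).1 hzw)
    exact ⟨e w', mem_image_of_mem e hw', by rw [hc', hc', hcw'], (hR a z' w').2 hzw'⟩

theorem tunableOn_of_tunable_subtype {R : A → Z → Z → Prop} {f : ℕ → ℕ}
    (h : Tunable (fun a (p q : W) => R a p q) f) : TunableOn W R f := by
  simpa using TunableOn.image (W := univ) h Subtype.val_injective id fun _ _ _ => Iff.rfl

end Transport

section Product

variable {A B X Y : Type*} {R : A → X → X → Prop} {S : B → Y → Y → Prop}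

theorem prodRel_swap (i : A ⊕ B) (p q : Y × X) :
    prodRel R S i p.swap q.swap ↔ prodRel S R i.swap p q := by
  cases i <;> simp [prodRel, and_comm]

theorem TunableOn.prod_swap {C : Set X} {D : Set Y} {f : ℕ → ℕ}
    (h : TunableOn (D ×ˢ C) (prodRel S R) f) : TunableOn (C ×ˢ D) (prodRel R S) f := by
  simpa only [image_swap_prod] using h.image Prod.swap_injective Sum.swap prodRel_swap

theorem TunableOn.prod_finite {C : Set X} {D : Set Y} {f : ℕ → ℕ} (hC : TunableOn C R f)
    (hf : Monotone f) (hD : D.Finite) {K : ℕ} (hK : D.ncard ≤ K) :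
    TunableOn (C ×ˢ D) (prodRel R S) fun n => f ((n + 1) ^ K) * K := by
  refine tunableOn_of_forall_coloring fun P hP hPfin => ?_
  have : Finite D := hD
  have : Finite P := hPfin
  let profile : X → D → Option P := fun x d => partOf P (x, d)
  obtain ⟨c, hcb, hcP, hc⟩ := hC.exists_coloring (κ := profile) (toFinite _)
  have hprofile : (profile '' C).ncard ≤ (P.ncard + 1) ^ K := calc
    _ ≤ Nat.card (D → Option P) := ncard_le_card _
    _ = (P.ncard + 1) ^ D.ncard := by simp [Nat.card_fun]
    _ ≤ _ := Nat.pow_le_pow_right P.ncard.succ_pos hK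
  refine ⟨ℕ × Y, fun p => (c p.1, p.2), Iio (f ((P.ncard + 1) ^ K)) ×ˢ D,
    (finite_Iio _).prod hD, ?_, ?_, ?_, ?_⟩
  · rw [ncard_prod, ncard_Iio_nat]
    exact Nat.mul_le_mul_left _ hK
  · rintro ⟨x, y⟩ ⟨hx, hy⟩
    exact ⟨(hcb x hx).trans_le (hf hprofile), hy⟩
  · rintro ⟨x, y⟩ ⟨hx, hy⟩ ⟨x', y'⟩ ⟨hx', -⟩ h
    obtain ⟨hxx', rfl⟩ := Prod.mk.inj h
    exact congrFun (hcP x hx x' hx' hxx') ⟨y, hy⟩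
  · rintro (a | b) ⟨x, y⟩ ⟨hx, hy⟩ ⟨x', y'⟩ ⟨hx', -⟩ h ⟨u, v⟩ ⟨hu, hv⟩ hstep <;>
      obtain ⟨hxx', rfl⟩ := Prod.mk.inj h
    · obtain ⟨hxu, rfl⟩ := hstep
      obtain ⟨u', hu', hcu', hxu'⟩ := hc a x hx x' hx' hxx' u hu hxu
      exact ⟨(u', y), ⟨hu', hy⟩, by simp [hcu'], hxu', rfl⟩
    · obtain ⟨rfl, hyv⟩ := hstep
      exact ⟨(x', v), ⟨hx', hv⟩, by simp [hxx'], rfl, hyv⟩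

end Product

section Clusters

variable {A Z : Type*} {R : A → Z → Z → Prop}

theorem mem_clusterOf_self (r : Z → Z → Prop) (z : Z) : z ∈ clusterOf r z := ⟨.refl, .refl⟩

theorem clusterOf_eq_of_mem {r : Z → Z → Prop} {z w : Z} (h : w ∈ clusterOf r z) :
    clusterOf r w = clusterOf r z := by
  ext u
  exact ⟨fun hu => ⟨h.1.trans hu.1, hu.2.trans h.2⟩,
    fun hu => ⟨h.2.trans hu.1, hu.2.trans h.1⟩⟩

/-- The color of `z` under the coloring `col C` of its cluster `C`, together with the type of
the colored cluster: which colors meet which parts of `P`, and which colors are `R a`-related. -/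
def clusterCode (R : A → Z → Z → Prop) (P : Set (Set Z)) (K : ℕ) (col : Set Z → Z → ℕ)
    (z : Z) : ((Fin K → Option P → Prop) × (A → Fin K → Fin K → Prop)) × ℕ :=
  let C := clusterOf (unionRel R) z
  ((fun i o => ∃ u ∈ C, col C u = i ∧ partOf P u = o,
    fun a i j => ∃ u ∈ C, ∃ v ∈ C, col C u = i ∧ col C v = j ∧ R a u v), col C z)

section ClusterCode

variable {M : Set Z} {P : Set (Set Z)} {K : ℕ} {col : Set Z → Z → ℕ}

theorem refinesOn_clusterCode
    (hcol : ∀ z ∈ M, let C := clusterOf (unionRel R) z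
      (∀ u ∈ C, col C u < K) ∧ RefinesOn C (col C) (partOf P) ∧ IsTunedColoring R C (col C)) :
    RefinesOn M (clusterCode R P K col) (partOf P) := by
  intro z hz z' hz' h
  simp only [clusterCode, Prod.mk.injEq] at h
  obtain ⟨⟨hlab, -⟩, hcolz⟩ := h
  have hz_lab := congrFun (congrFun hlab ⟨_, (hcol z hz).1 z (mem_clusterOf_self _ z)⟩)
    (partOf P z)
  obtain ⟨u, hu, hcu, hpu⟩ := hz_lab.mp ⟨z, mem_clusterOf_self _ z, rfl, rfl⟩
  rw [← hpu]
  exact (hcol z' hz').2.1 u hu z' (mem_clusterOf_self _ z') (hcu.trans hcolz)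

theorem isTunedColoring_clusterCode
    (hcol : ∀ z ∈ M, let C := clusterOf (unionRel R) z
      (∀ u ∈ C, col C u < K) ∧ RefinesOn C (col C) (partOf P) ∧ IsTunedColoring R C (col C))
    (hstep : ∀ a, ∀ z ∈ M, ∀ w ∈ M, R a z w → w ∈ clusterOf (unionRel R) z)
    (hM : ∀ z ∈ M, clusterOf (unionRel R) z ⊆ M) :
    IsTunedColoring R M (clusterCode R P K col) := by
  intro a z hz z' hz' h w hw hzw
  have hwC : w ∈ clusterOf (unionRel R) z := hstep a z hz w hw hzw
  simp only [clusterCode, Prod.mk.injEq] at h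
  obtain ⟨⟨hlab, hrel⟩, hcolz⟩ := h
  obtain ⟨u, hu, v, hv, hcu, hcv, huv⟩ := (congrFun (congrFun (congrFun hrel a)
    ⟨_, (hcol z hz).1 z (mem_clusterOf_self _ z)⟩) ⟨_, (hcol z hz).1 w hwC⟩).mp
    ⟨z, mem_clusterOf_self _ z, w, hwC, rfl, rfl, hzw⟩
  obtain ⟨w', hw', hcw', hzw'⟩ :=
    (hcol z' hz').2.2 a u hu z' (mem_clusterOf_self _ z') (hcu.trans hcolz) v hv huv
  refine ⟨w', hM z' hz' hw', ?_, hzw'⟩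
  simp only [clusterCode, clusterOf_eq_of_mem hw', clusterOf_eq_of_mem hwC, Prod.mk.injEq]
  exact ⟨⟨hlab.symm, hrel.symm⟩, hcw'.trans hcv⟩

end ClusterCode

noncomputable def glueBound (A : Type*) (g : ℕ → ℕ) (n : ℕ) : ℕ :=
  (2 ^ (n + 1)) ^ g n * ((2 ^ g n) ^ g n) ^ Nat.card A * g n

theorem monotone_glueBound {g : ℕ → ℕ} (hg : Monotone g) : Monotone (glueBound A g) := by
  intro m n hmn
  have := hg hmn
  unfold glueBound
  gcongr <;> first | exact Nat.one_le_two_pow | omega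

theorem tunableOn_of_rel_mem_clusterOf [Finite A] {M : Set Z} {g : ℕ → ℕ} (hg : Monotone g)
    (hcl : ∀ z ∈ M, TunableOn (clusterOf (unionRel R) z) R g)
    (hM : ∀ z ∈ M, clusterOf (unionRel R) z ⊆ M)
    (hstep : ∀ a, ∀ z ∈ M, ∀ w ∈ M, R a z w → w ∈ clusterOf (unionRel R) z) :
    TunableOn M R (glueBound A g) := by
  refine tunableOn_of_forall_coloring fun P hP hPfin => ?_
  have : Finite P := hPfin
  -- indexed by the cluster itself, so that all points of a cluster share one coloring
  have hcol : ∀ C : Set Z, ∃ c : Z → ℕ, ∀ z ∈ M, clusterOf (unionRel R) z = C →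
      (∀ u ∈ C, c u < g P.ncard) ∧ RefinesOn C c (partOf P) ∧ IsTunedColoring R C c := by
    intro C
    by_cases hC : ∃ z ∈ M, clusterOf (unionRel R) z = C
    · obtain ⟨z, hz, rfl⟩ := hC
      obtain ⟨c, hcb, hcP, hc⟩ := (hcl z hz).exists_coloring (κ := partOf P) (toFinite _)
      have hn : (partOf P '' clusterOf (unionRel R) z).ncard ≤ P.ncard :=
        hP.ncard_image_partOf ▸ ncard_le_ncard (image_mono (hM z hz)) (toFinite _)
      exact ⟨c, fun _ _ _ => ⟨fun u hu => (hcb u hu).trans_le (hg hn), hcP, hc⟩⟩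
    · exact ⟨fun _ => 0, fun z hz hzC => absurd ⟨z, hz, hzC⟩ hC⟩
  choose col hcol using hcol
  have hcol' := fun z hz => hcol _ z hz rfl
  refine ⟨_, clusterCode R P (g P.ncard) col, univ ×ˢ Iio (g P.ncard), toFinite _, ?_,
    fun z hz => ⟨trivial, (hcol' z hz).1 z (mem_clusterOf_self _ z)⟩,
    refinesOn_clusterCode hcol', isTunedColoring_clusterCode hcol' hstep hM⟩
  rw [ncard_prod, ncard_univ, ncard_Iio_nat]
  simp [glueBound, Nat.card_fun]

end Clusters

section Layers

variable {A Z : Type*} {R : A → Z → Z → Prop}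

noncomputable def unionBound (A : Type*) (f g : ℕ → ℕ) (n : ℕ) : ℕ :=
  f n + g (n * (2 ^ f n) ^ Nat.card A)

theorem monotone_unionBound {f g : ℕ → ℕ} (hf : Monotone f) (hg : Monotone g) :
    Monotone (unionBound A f g) := by
  intro m n hmn
  have := hf hmn
  unfold unionBound
  gcongr
  exact hg (by gcongr; omega)

section Stack

variable {U B : Set Z} {k : ℕ} {c₁ c₂ : Z → ℕ}

open Classical in
noncomputable def stackColoring (U : Set Z) (k : ℕ) (c₁ c₂ : Z → ℕ) (z : Z) : ℕ :=
  if z ∈ U then c₁ z else k + c₂ z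

theorem stackColoring_of_mem {z : Z} (hz : z ∈ U) : stackColoring U k c₁ c₂ z = c₁ z := by
  simp [stackColoring, hz]

theorem stackColoring_of_mem_right (hUB : Disjoint U B) {z : Z} (hz : z ∈ B) :
    stackColoring U k c₁ c₂ z = k + c₂ z := by
  simp [stackColoring, disjoint_right.mp hUB hz]

theorem stackColoring_eq (hUB : Disjoint U B) (hc₁b : ∀ z ∈ U, c₁ z < k) {z z' : Z}
    (hz : z ∈ U ∪ B) (hz' : z' ∈ U ∪ B)
    (h : stackColoring U k c₁ c₂ z = stackColoring U k c₁ c₂ z') :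
    (z ∈ U ∧ z' ∈ U ∧ c₁ z = c₁ z') ∨ (z ∈ B ∧ z' ∈ B ∧ c₂ z = c₂ z') := by
  rcases hz with hz | hz <;> rcases hz' with hz' | hz' <;>
    simp only [stackColoring_of_mem, stackColoring_of_mem_right hUB, hz, hz'] at h <;> grind

theorem IsTunedColoring.stackColoring (hUB : Disjoint U B) (hc₁b : ∀ z ∈ U, c₁ z < k)
    (hc₁ : IsTunedColoring R U c₁) (hc₂ : IsTunedColoring R B c₂)
    (hBU : ∀ a, ∀ z ∈ U, ∀ w ∈ B, ¬ R a z w)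
    (hreach : ∀ a, ∀ z ∈ B, ∀ z' ∈ B, c₂ z = c₂ z' → ∀ w ∈ U, R a z w →
      ∃ w' ∈ U, c₁ w' = c₁ w ∧ R a z' w') :
    IsTunedColoring R (U ∪ B) (stackColoring U k c₁ c₂) := by
  intro a z hz z' hz' h w hw hzw
  rcases stackColoring_eq hUB hc₁b hz hz' h with ⟨hz, hz', h⟩ | ⟨hz, hz', h⟩
  · have hwU : w ∈ U := hw.resolve_right fun hwB => hBU a z hz w hwB hzw
    obtain ⟨w', hw', hcw', hzw'⟩ := hc₁ a z hz z' hz' h w hwU hzw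
    exact ⟨w', .inl hw', by rw [stackColoring_of_mem hw', stackColoring_of_mem hwU, hcw'], hzw'⟩
  · rcases hw with hwU | hwB
    · obtain ⟨w', hw', hcw', hzw'⟩ := hreach a z hz z' hz' h w hwU hzw
      exact ⟨w', .inl hw', by rw [stackColoring_of_mem hw', stackColoring_of_mem hwU, hcw'],
        hzw'⟩
    · obtain ⟨w', hw', hcw', hzw'⟩ := hc₂ a z hz z' hz' h w hwB hzw
      exact ⟨w', .inr hw', by
        rw [stackColoring_of_mem_right hUB hw', stackColoring_of_mem_right hUB hwB, hcw'], hzw'⟩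

end Stack

theorem TunableOn.union [Finite A] {U B : Set Z} {f g : ℕ → ℕ} (hU : TunableOn U R f)
    (hB : TunableOn B R g) (hf : Monotone f) (hg : Monotone g) (hUB : Disjoint U B)
    (hBU : ∀ a, ∀ z ∈ U, ∀ w ∈ B, ¬ R a z w) : TunableOn (U ∪ B) R (unionBound A f g) := by
  refine tunableOn_of_forall_coloring fun P hP hPfin => ?_
  have : Finite P := hPfin
  set n := P.ncard
  have hn {V : Set Z} (hV : V ⊆ U ∪ B) : (partOf P '' V).ncard ≤ n :=
    (ncard_le_ncard (image_mono hV) (toFinite _)).trans_eq hP.ncard_image_partOf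
  obtain ⟨c₁, hc₁b, hc₁P, hc₁⟩ := hU.exists_coloring (κ := partOf P) (toFinite _)
  replace hc₁b : ∀ z ∈ U, c₁ z < f n := fun z hz =>
    (hc₁b z hz).trans_le (hf (hn subset_union_left))
  let reach (z : Z) (a : A) (i : Fin (f n)) : Prop := ∃ w ∈ U, c₁ w = i ∧ R a z w
  obtain ⟨c₂, hc₂b, hc₂P, hc₂⟩ :=
    hB.exists_coloring (κ := fun z => (partOf P z, reach z)) (toFinite _)
  replace hc₂b : ∀ z ∈ B, c₂ z < g (n * (2 ^ f n) ^ Nat.card A) := by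
    refine fun z hz => (hc₂b z hz).trans_le (hg ?_)
    calc _ ≤ ((partOf P '' B) ×ˢ (univ : Set (A → Fin (f n) → Prop))).ncard :=
          ncard_le_ncard (by rintro _ ⟨z, hz, rfl⟩; exact ⟨mem_image_of_mem _ hz, trivial⟩)
      _ ≤ _ := by
          rw [ncard_prod, ncard_univ]
          simpa [Nat.card_fun] using Nat.mul_le_mul_right _ (hn subset_union_right)
  refine ⟨ℕ, stackColoring U (f n) c₁ c₂, Iio (unionBound A f g n), finite_Iio _,
    (ncard_Iio_nat _).le, ?_, ?_,
    hc₁.stackColoring hUB hc₁b hc₂ hBU fun a z hz z' hz' h w hw hzw => ?_⟩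
  · rintro z (hz | hz)
    · simpa [stackColoring_of_mem hz, unionBound] using Nat.lt_add_right _ (hc₁b z hz)
    · simpa [stackColoring_of_mem_right hUB hz, unionBound] using hc₂b z hz
  · intro z hz z' hz' h
    rcases stackColoring_eq hUB hc₁b hz hz' h with ⟨hz, hz', h⟩ | ⟨hz, hz', h⟩
    · exact hc₁P z hz z' hz' h
    · exact congrArg Prod.fst (hc₂P z hz z' hz' h)
  · have hreach := congrArg Prod.snd (hc₂P z hz z' hz' h)
    exact (congrFun (congrFun hreach a) ⟨c₁ w, hc₁b w hw⟩).mp ⟨w, hw, rfl, hzw⟩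

end Layers

section Rank

variable {A Z : Type*} {r : Z → Z → Prop} {ρ : Z → ℕ}

def IsRankFn (r : Z → Z → Prop) (ρ : Z → ℕ) : Prop :=
  ∀ ⦃z w⦄, r z w → ρ w ≤ ρ z ∧ (¬ ReflTransGen r w z → ρ w < ρ z)

theorem IsRankFn.le_of_reflTransGen (hρ : IsRankFn r ρ) {z w : Z} (h : ReflTransGen r z w) :
    ρ w ≤ ρ z := by
  induction h with
  | refl => exact le_rfl
  | tail _ hst ih => exact (hρ hst).1.trans ih

theorem IsRankFn.eq_of_mem_clusterOf (hρ : IsRankFn r ρ) {z w : Z} (h : w ∈ clusterOf r z) :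
    ρ w = ρ z :=
  le_antisymm (hρ.le_of_reflTransGen h.1) (hρ.le_of_reflTransGen h.2)

theorem IsRankFn.mem_clusterOf_of_eq (hρ : IsRankFn r ρ) {z w : Z} (hzw : r z w)
    (h : ρ w = ρ z) : w ∈ clusterOf r z :=
  ⟨.single hzw, by_contra fun hwz => ((hρ hzw).2 hwz).ne h⟩

/-- The rank of `z` is the length of the longest strict chain starting at `z`. -/
theorem HeightLe.exists_rankFn {h : ℕ} (hh : HeightLe r h) :
    ∃ ρ : Z → ℕ, IsRankFn r ρ ∧ ∀ z, ρ z < h := by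
  classical
  let Chain (z : Z) (k : ℕ) : Prop :=
    ∃ x : ℕ → Z, x 0 = z ∧ IsStrictChain (ReflTransGen r) (k + 1) x
  have chain_zero (z : Z) : Chain z 0 := ⟨fun _ => z, rfl, fun i hi => by omega⟩
  have chain_lt {z : Z} {k : ℕ} (hk : Chain z k) : k < h := by
    by_contra! hle
    obtain ⟨x, -, hx⟩ := hk
    exact hh x fun i hi => hx i (by omega)
  have chain_step {z w : Z} {k : ℕ} (hzw : ReflTransGen r z w) (hk : Chain w k) :
      Chain z k ∧ (¬ ReflTransGen r w z → Chain z (k + 1)) := by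
    obtain ⟨x, rfl, hx⟩ := hk
    refine ⟨⟨fun i => if i = 0 then z else x i, rfl, fun i hi => ?_⟩,
      fun hwz => ⟨fun i => if i = 0 then z else x (i - 1), rfl, fun i hi => ?_⟩⟩
    · rcases i with _ | i
      · obtain ⟨h01, h10⟩ := hx 0 hi
        exact ⟨hzw.trans h01, fun h1z => h10 (h1z.trans hzw)⟩
      · simpa using hx (i + 1) hi
    · rcases i with _ | i
      · exact ⟨hzw, hwz⟩
      · simpa using hx i (by omega)
  have chain_rank (z : Z) := Nat.findGreatest_spec (Nat.zero_le h) (chain_zero z)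
  refine ⟨fun z => Nat.findGreatest (Chain z) h, fun z w hzw => ?_,
    fun z => chain_lt (chain_rank z)⟩
  obtain ⟨hle, hlt⟩ := chain_step (.single hzw) (chain_rank w)
  exact ⟨Nat.le_findGreatest (chain_lt (chain_rank w)).le hle,
    fun hwz => Nat.le_findGreatest (chain_lt (chain_rank w)) (hlt hwz)⟩

noncomputable def layerBound (A : Type*) (g : ℕ → ℕ) : ℕ → ℕ → ℕ
  | 0 => fun _ => 0
  | h + 1 => unionBound A (layerBound A g h) (glueBound A g)

theorem monotone_layerBound {g : ℕ → ℕ} (hg : Monotone g) :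
    ∀ h, Monotone (layerBound A g h)
  | 0 => monotone_const
  | h + 1 => monotone_unionBound (monotone_layerBound hg h) (monotone_glueBound hg)

theorem IsRankFn.tunableOn_setOf_lt [Finite A] {R : A → Z → Z → Prop} {g : ℕ → ℕ}
    (hρ : IsRankFn (unionRel R) ρ) (hg : Monotone g)
    (hcl : ∀ z, TunableOn (clusterOf (unionRel R) z) R g) :
    ∀ h, TunableOn {z | ρ z < h} R (layerBound A g h)
  | 0 => by simpa using tunableOn_empty _
  | h + 1 => by
    have hlayer : TunableOn {z | ρ z = h} R (glueBound A g) :=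
      tunableOn_of_rel_mem_clusterOf hg (fun z _ => hcl z)
        (fun z hz w hw => (hρ.eq_of_mem_clusterOf hw).trans hz)
        (fun a z hz w hw hzw => hρ.mem_clusterOf_of_eq ⟨a, hzw⟩ (hw.trans hz.symm))
    have hunion := (hρ.tunableOn_setOf_lt hg hcl h).union hlayer (monotone_layerBound hg h)
      (monotone_glueBound hg) (disjoint_left.mpr fun z hz hz' => hz.ne hz')
      (fun a z hz w hw hzw => ((hρ ⟨a, hzw⟩).1.trans_lt hz).ne hw)
    have hsplit : {z | ρ z < h + 1} = {z | ρ z < h} ∪ {z | ρ z = h} := by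
      ext z
      simp only [mem_ofPred_eq, mem_union]
      omega
    rw [hsplit]
    exact hunion

end Rank

section ProductFrame

variable {A B X Y : Type*} {R : A → X → X → Prop} {S : B → Y → Y → Prop}

theorem reflTransGen_prodRel_left {x x' : X} (h : ReflTransGen (unionRel R) x x') (y : Y) :
    ReflTransGen (unionRel (prodRel R S)) (x, y) (x', y) :=
  h.lift (fun x => (x, y)) fun _ _ ⟨a, ha⟩ => ⟨.inl a, ha, rfl⟩

theorem reflTransGen_prodRel_right {y y' : Y} (h : ReflTransGen (unionRel S) y y') (x : X) :
    ReflTransGen (unionRel (prodRel R S)) (x, y) (x, y') :=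
  h.lift (fun y => (x, y)) fun _ _ ⟨b, hb⟩ => ⟨.inr b, rfl, hb⟩

theorem Relation.ReflTransGen.fst_of_prodRel {p q : X × Y}
    (h : ReflTransGen (unionRel (prodRel R S)) p q) : ReflTransGen (unionRel R) p.1 q.1 := by
  refine ReflTransGen.lift' Prod.fst (fun u v => ?_) p q h
  rintro ⟨a | b, huv⟩
  exacts [.single ⟨a, huv.1⟩, by simp only [Function.onFun, huv.1]; exact .refl]

theorem Relation.ReflTransGen.snd_of_prodRel {p q : X × Y}
    (h : ReflTransGen (unionRel (prodRel R S)) p q) : ReflTransGen (unionRel S) p.2 q.2 := by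
  refine ReflTransGen.lift' Prod.snd (fun u v => ?_) p q h
  rintro ⟨a | b, huv⟩
  exacts [by simp only [Function.onFun, huv.2]; exact .refl, .single ⟨b, huv.2⟩]

theorem clusterOf_prodRel (x : X) (y : Y) :
    clusterOf (unionRel (prodRel R S)) (x, y) =
      clusterOf (unionRel R) x ×ˢ clusterOf (unionRel S) y := by
  ext ⟨x', y'⟩
  constructor
  · rintro ⟨h, h'⟩
    exact ⟨⟨h.fst_of_prodRel, h'.fst_of_prodRel⟩, h.snd_of_prodRel, h'.snd_of_prodRel⟩
  · rintro ⟨⟨hx, hx'⟩, hy, hy'⟩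
    exact ⟨(reflTransGen_prodRel_left hx y).trans (reflTransGen_prodRel_right hy x'),
      (reflTransGen_prodRel_right hy' x').trans (reflTransGen_prodRel_left hx' y)⟩

theorem IsRankFn.prodRel {ρ₁ : X → ℕ} {ρ₂ : Y → ℕ} (h₁ : IsRankFn (unionRel R) ρ₁)
    (h₂ : IsRankFn (unionRel S) ρ₂) :
    IsRankFn (unionRel (prodRel R S)) fun p => ρ₁ p.1 + ρ₂ p.2 := by
  rintro ⟨x, y⟩ ⟨x', y'⟩ ⟨a | b, hstep⟩
  · obtain ⟨hxx', rfl : y = y'⟩ := hstep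
    obtain ⟨hle, hlt⟩ := h₁ ⟨a, hxx'⟩
    refine ⟨Nat.add_le_add_right hle _, fun h => Nat.add_lt_add_right (hlt fun h' => ?_) _⟩
    exact h (reflTransGen_prodRel_left h' y)
  · obtain ⟨rfl : x = x', hyy'⟩ := hstep
    obtain ⟨hle, hlt⟩ := h₂ ⟨b, hyy'⟩
    refine ⟨Nat.add_le_add_left hle _, fun h => Nat.add_lt_add_left (hlt fun h' => ?_) _⟩
    exact h (reflTransGen_prodRel_right h' x)

theorem exists_injOn_Iic_of_lt_encard {C : Set X} {k : ℕ} (h : (k : ℕ∞) < C.encard) :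
    ∃ c : ℕ → X, MapsTo c (Iic k) C ∧ InjOn c (Iic k) := by
  obtain ⟨x, -⟩ := encard_pos.mp (pos_of_gt h)
  have : Nonempty X := ⟨x⟩
  refine (finite_Iic k).exists_injOn_of_encard_le ?_
  simpa [encard_eq_coe_toFinset_card] using Order.add_one_le_of_lt h

theorem RP.finite_ncard_le_or {r₁ : X → X → Prop} {r₂ : Y → Y → Prop} {m : ℕ}
    (hRP : RP (fun p q : X × Y => (r₁ p.1 q.1 ∧ p.2 = q.2) ∨ (p.1 = q.1 ∧ r₂ p.2 q.2)) m)
    {C : Set X} {D : Set Y} (hC : ∀ u ∈ C, ∀ v ∈ C, r₁ u v) (hD : ∀ u ∈ D, ∀ v ∈ D, r₂ u v) :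
    (C.Finite ∧ C.ncard ≤ m + 1) ∨ (D.Finite ∧ D.ncard ≤ m + 1) := by
  simp only [← encard_le_coe_iff_finite_ncard_le]
  by_contra! h
  obtain ⟨c, hcC, hc⟩ := exists_injOn_Iic_of_lt_encard h.1
  obtain ⟨d, hdD, hd⟩ := exists_injOn_Iic_of_lt_encard h.2
  -- a zigzag path in `C × D` whose points share a coordinate only when they are adjacent
  let p : ℕ → X × Y := fun i => (c ((i + 1) / 2), d (i / 2))
  have hfst {i j : ℕ} (hi : i ≤ m + 1) (hj : j ≤ m + 1) (h : (p i).1 = (p j).1) :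
      (i + 1) / 2 = (j + 1) / 2 :=
    hc (mem_Iic.mpr (by omega)) (mem_Iic.mpr (by omega)) h
  have hsnd {i j : ℕ} (hi : i ≤ m + 1) (hj : j ≤ m + 1) (h : (p i).2 = (p j).2) :
      i / 2 = j / 2 :=
    hd (mem_Iic.mpr (by omega)) (mem_Iic.mpr (by omega)) h
  have hcC' (k : ℕ) (hk : k ≤ m + 1) : c k ∈ C := hcC (mem_Iic.mpr hk)
  have hdD' (k : ℕ) (hk : k ≤ m + 1) : d k ∈ D := hdD (mem_Iic.mpr hk)
  have hpath : ∀ i ≤ m, (r₁ (p i).1 (p (i + 1)).1 ∧ (p i).2 = (p (i + 1)).2) ∨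
      ((p i).1 = (p (i + 1)).1 ∧ r₂ (p i).2 (p (i + 1)).2) := by
    intro i hi
    obtain ⟨t, rfl | rfl⟩ := Nat.even_or_odd' i
    · exact Or.inl ⟨hC _ (hcC' _ (by omega)) _ (hcC' _ (by omega)), congrArg d (by omega)⟩
    · exact Or.inr ⟨congrArg c (by omega), hD _ (hdD' _ (by omega)) _ (hdD' _ (by omega))⟩
  rcases hRP p hpath with ⟨i, j, hij, hj, hp⟩ | ⟨i, j, hij, hj, ⟨-, hp⟩ | ⟨hp, -⟩⟩
  · have := hfst (by omega) hj (congrArg Prod.fst hp)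
    have := hsnd (by omega) hj (congrArg Prod.snd hp)
    omega
  · have := hsnd (by omega) (by omega) hp
    omega
  · have := hfst (by omega) (by omega) hp
    omega

end ProductFrame

/-- Reducible-path criterion, semantic form: given heights `h₁ h₂`, a monotone `f` and
`m`, there is a single `t` such that for all frames `F` of height `≤ h₁` and `G` of
height `≤ h₂` whose cluster-restrictions are all `f`-tunable, if the union of all
relations of `F* × G*` satisfies `RP_m`, then the product frame `F × G` is `t`-tunable. -/
theorem stmt6 {A B : Type*} [Finite A] [Finite B] (h₁ h₂ : ℕ)
    (f : ℕ → ℕ) (hf : Monotone f) (m : ℕ) :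
    ∃ t : ℕ → ℕ, ∀ (X Y : Type u) [Nonempty X] [Nonempty Y]
      (R : A → X → X → Prop) (S : B → Y → Y → Prop),
      HeightLe (unionRel R) h₁ →
      HeightLe (unionRel S) h₂ →
      (∀ x : X, Tunable (fun a (p q : clusterOf (unionRel R) x) => R a p.1 q.1) f) →
      (∀ y : Y, Tunable (fun b (p q : clusterOf (unionRel S) y) => S b p.1 q.1) f) →
      RP (fun p q : X × Y =>
        (Relation.ReflTransGen (unionRel R) p.1 q.1 ∧ p.2 = q.2) ∨
          (p.1 = q.1 ∧ Relation.ReflTransGen (unionRel S) p.2 q.2)) m →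
      Tunable (prodRel R S) t := by
  set g : ℕ → ℕ := fun n => f ((n + 1) ^ (m + 1)) * (m + 1)
  have hg : Monotone g := fun a b hab =>
    Nat.mul_le_mul_right _ (hf (Nat.pow_le_pow_left (by omega) _))
  refine ⟨layerBound (A ⊕ B) g (h₁ + h₂), fun X Y _ _ R S hR hS hclR hclS hRP => ?_⟩
  obtain ⟨ρ₁, hρ₁, hρ₁h⟩ := hR.exists_rankFn
  obtain ⟨ρ₂, hρ₂, hρ₂h⟩ := hS.exists_rankFn
  have hcl (p : X × Y) : TunableOn (clusterOf (unionRel (prodRel R S)) p) (prodRel R S) g := by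
    rw [clusterOf_prodRel]
    rcases hRP.finite_ncard_le_or (C := clusterOf (unionRel R) p.1)
      (D := clusterOf (unionRel S) p.2) (fun u hu v hv => hu.2.trans hv.1)
      (fun u hu v hv => hu.2.trans hv.1) with ⟨hfin, hcard⟩ | ⟨hfin, hcard⟩
    · exact ((tunableOn_of_tunable_subtype (hclS p.2)).prod_finite hf hfin hcard).prod_swap
    · exact (tunableOn_of_tunable_subtype (hclR p.1)).prod_finite hf hfin hcard
  have hlt : {p : X × Y | ρ₁ p.1 + ρ₂ p.2 < h₁ + h₂} = univ :=
    eq_univ_of_forall fun p => by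
      have := hρ₁h p.1
      have := hρ₂h p.2
      simp only [mem_ofPred_eq]
      omega
  have := (hρ₁.prodRel hρ₂).tunableOn_setOf_lt hg hcl (h₁ + h₂)
  rwa [hlt] at this
end

section
/- If a binary relation R on a set X satisfies RP_m, then R is m-transitive, i.e., R^{≤m} = R*. -/
lemma relPow_to_fun {X : Type*} {R : X → X → Prop} :
    ∀ {n : ℕ} {x y : X}, relPow R n x y →
      ∃ f : ℕ → X, f 0 = x ∧ f n = y ∧ ∀ i < n, R (f i) (f (i + 1)) := by
  intro n
  induction n with
  | zero => intro x y hxy; exact ⟨fun _ => x, rfl, hxy.symm ▸ rfl, by omega⟩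
  | succ n ih =>
    rintro x y ⟨z, hxz, hzy⟩
    obtain ⟨f, hf0, hfn, hfc⟩ := ih hzy
    refine ⟨fun i => if i = 0 then x else f (i - 1), by simp, by simp [hfn], ?_⟩
    intro i hi
    rcases Nat.eq_zero_or_pos i with h0 | h0
    · subst h0; simpa [hf0] using hxz
    · have hne : i ≠ 0 := by omega
      have e1 : (if i = 0 then x else f (i - 1)) = f (i - 1) := if_neg hne
      have e2 : (if i + 1 = 0 then x else f (i + 1 - 1)) = f (i + 1 - 1) :=
        if_neg (by omega)
      beta_reduce
      rw [e1, e2]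
      have h1 : i + 1 - 1 = (i - 1) + 1 := by omega
      rw [h1]
      exact hfc (i - 1) (by omega)

lemma fun_to_relPow {X : Type*} {R : X → X → Prop} :
    ∀ {n : ℕ} (f : ℕ → X), (∀ i < n, R (f i) (f (i + 1))) →
      relPow R n (f 0) (f n) := by
  intro n
  induction n with
  | zero => intro f _; rfl
  | succ n ih =>
    intro f hf
    refine ⟨f 1, hf 0 (by omega), ?_⟩
    have := ih (fun i => f (i + 1)) (fun i hi => hf (i + 1) (by omega))
    exact this

lemma shorten {X : Type*} {R : X → X → Prop} {m : ℕ} (h : RP R m)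
    {n : ℕ} (hn : m + 1 ≤ n) {x y : X} (hp : relPow R n x y) :
    ∃ n' < n, relPow R n' x y := by
  obtain ⟨f, hf0, hfn, hfc⟩ := relPow_to_fun hp
  have hchain : ∀ i ≤ m, R (f i) (f (i + 1)) := fun i hi => hfc i (by omega)
  have key : ∃ i j, i < j ∧ j ≤ n ∧ (f i = f j ∨ (j < n ∧ R (f i) (f (j + 1)))) := by
    rcases h f hchain with ⟨i, j, hij, hj, hrep⟩ | ⟨i, j, hij, hj, hR⟩
    · exact ⟨i, j, hij, by omega, Or.inl hrep⟩
    · exact ⟨i, j, hij, by omega, Or.inr ⟨by omega, hR⟩⟩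
  obtain ⟨i, j, hij, hjn, hcase⟩ := key
  set d := j - i with hd
  refine ⟨n - d, by omega, ?_⟩
  set g : ℕ → X := fun k => if k ≤ i then f k else f (k + d) with hg
  have hg0 : g 0 = x := by simp [hg, hf0]
  have hgn : g (n - d) = y := by
    rcases Nat.lt_or_ge i (n - d) with hlt | hge
    · have : ¬ (n - d ≤ i) := by omega
      simp only [hg, if_neg this]
      have : n - d + d = n := by omega
      rw [this, hfn]
    · -- n - d ≤ i, so n - d = i and n = j, so repeat case with f i = f n
      have hni : n - d = i := by omega
      have hnj : n = j := by omega
      rcases hcase with hrep | ⟨hjlt, _⟩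
      · simp only [hg, hni, if_pos (le_refl i)]
        rw [hrep, ← hnj, hfn]
      · omega
  have hgc : ∀ k < n - d, R (g k) (g (k + 1)) := by
    intro k hk
    rcases Nat.lt_trichotomy k i with h1 | h1 | h1
    · have e1 : g k = f k := if_pos (by omega)
      have e2 : g (k + 1) = f (k + 1) := if_pos (by omega)
      rw [e1, e2]; exact hfc k (by omega)
    · subst h1
      have e1 : g k = f k := if_pos le_rfl
      have e2 : g (k + 1) = f (j + 1) := by
        rw [hg]; simp only [if_neg (by omega : ¬ k + 1 ≤ k)]
        congr 1; omega
      rw [e1, e2]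
      rcases hcase with hrep | ⟨_, hR⟩
      · rw [hrep]; exact hfc j (by omega)
      · exact hR
    · have e1 : g k = f (k + d) := if_neg (by omega)
      have e2 : g (k + 1) = f (k + 1 + d) := if_neg (by omega)
      rw [e1, e2]
      have : k + d + 1 = k + 1 + d := by omega
      rw [← this]
      exact hfc (k + d) (by omega)
  have := fun_to_relPow g hgc
  rwa [hg0, hgn] at this

lemma relPow_relLe {X : Type*} {R : X → X → Prop} {m : ℕ} (h : RP R m) :
    ∀ n {x y : X}, relPow R n x y → relLe R m x y := by
  intro n
  induction n using Nat.strong_induction_on with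
  | _ n ih =>
    intro x y hp
    rcases Nat.lt_or_ge n (m + 1) with hn | hn
    · exact ⟨n, by omega, hp⟩
    · obtain ⟨n', hn', hp'⟩ := shorten h hn hp
      exact ih n' hn' hp'

/-- If a binary relation `R` satisfies `RP_m`, then `R` is `m`-transitive:
`R^{≤m} = R*`. -/
theorem stmt7 {X : Type*} (R : X → X → Prop) (m : ℕ) (h : RP R m) :
    relLe R m = Relation.ReflTransGen R := by
  ext x y
  constructor
  · rintro ⟨i, _, hp⟩
    clear * - hp
    induction i generalizing x with
    | zero => exact hp ▸ Relation.ReflTransGen.refl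
    | succ n ih =>
      obtain ⟨z, hxz, hzy⟩ := hp
      exact Relation.ReflTransGen.head hxz (ih z hzy)
  · intro hxy
    have : ∃ n, relPow R n x y := by
      induction hxy with
      | refl => exact ⟨0, rfl⟩
      | tail _ hR ih =>
        obtain ⟨n, hn⟩ := ih
        refine ⟨n + 1, ?_⟩
        clear * - hn hR
        induction n generalizing x with
        | zero => exact ⟨_, hn ▸ hR, rfl⟩
        | succ k ih =>
          obtain ⟨z, hxz, hz⟩ := hn
          exact ⟨z, hxz, ih z hz⟩
    obtain ⟨n, hn⟩ := this
    exact relPow_relLe h n hn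
end

section
/- Let R be a binary relation on X such that every sequence (a_i)_{i∈ℕ} with a_i R a_{i+1} for all i admits some i with a_{i+1} R a_i (this holds in particular when R is transitive and (X,R) has finite height). Let S be a binary relation on Y, let T be the union of the horizontal lift of R and the vertical lift of S on X×Y (i.e., (a,b) T (a',b') iff (a R a' and b = b') or (a = a' and b S b')), and let P, Q ⊆ X×Y. Suppose (a₀,b₀) ∈ P and for every (a,b) with (a₀,b₀) T* (a,b): if (a,b) ∈ P then there is a' with a R a' and (a',b) ∈ Q, and if (a,b) ∈ Q then there is b' with b S b' and (a,b') ∈ P. Then there exist c, c' ∈ X and d ∈ Y such that (a₀,b₀) T* (c,d), (c,d) ∈ Q, c R c', and (c',d) ∈ P. -/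
/-- Semantic content of the validity of
`p ∧ □^{≤2}(p → ◇₁q) ∧ □^{≤2}(q → ◇₂p) → ◇^{≤2}(q ∧ ◇₁p)` in products of a transitive
frame of finite height with an arbitrary frame. `T` is the union of the horizontal lift
of `R` and the vertical lift of `S` on `X × Y`. -/
theorem stmt9 {X Y : Type*} (R : X → X → Prop) (S : Y → Y → Prop)
    (hR : ∀ a : ℕ → X, (∀ i, R (a i) (a (i + 1))) → ∃ i, R (a (i + 1)) (a i))
    (P Q : Set (X × Y)) (a₀ : X) (b₀ : Y)
    (hP0 : (a₀, b₀) ∈ P)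
    (hstep : ∀ p : X × Y,
      Relation.ReflTransGen
        (fun p q : X × Y => (R p.1 q.1 ∧ p.2 = q.2) ∨ (p.1 = q.1 ∧ S p.2 q.2))
        (a₀, b₀) p →
      (p ∈ P → ∃ a', R p.1 a' ∧ (a', p.2) ∈ Q) ∧
      (p ∈ Q → ∃ b', S p.2 b' ∧ (p.1, b') ∈ P)) :
    ∃ (c c' : X) (d : Y),
      Relation.ReflTransGen
        (fun p q : X × Y => (R p.1 q.1 ∧ p.2 = q.2) ∨ (p.1 = q.1 ∧ S p.2 q.2))
        (a₀, b₀) (c, d) ∧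
      (c, d) ∈ Q ∧ R c c' ∧ (c', d) ∈ P := by
  classical
  set T := fun p q : X × Y => (R p.1 q.1 ∧ p.2 = q.2) ∨ (p.1 = q.1 ∧ S p.2 q.2) with hT
  have key : ∀ p : X × Y, Relation.ReflTransGen T (a₀, b₀) p → p ∈ P →
      ∃ q : X × Y, R p.1 q.1 ∧ (q.1, p.2) ∈ Q ∧ q ∈ P ∧
        Relation.ReflTransGen T (a₀, b₀) q := by
    intro p hr hp
    obtain ⟨a', ha', hq⟩ := (hstep p hr).1 hp
    have hr2 : Relation.ReflTransGen T (a₀, b₀) (a', p.2) :=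
      hr.tail (Or.inl ⟨ha', rfl⟩)
    obtain ⟨b', hb', hp'⟩ := (hstep (a', p.2) hr2).2 hq
    exact ⟨(a', b'), ha', hq, hp', hr2.tail (Or.inr ⟨rfl, hb'⟩)⟩
  let G : {p : X × Y // Relation.ReflTransGen T (a₀, b₀) p ∧ p ∈ P} →
      {p : X × Y // Relation.ReflTransGen T (a₀, b₀) p ∧ p ∈ P} := fun z =>
    ⟨(key z.1 z.2.1 z.2.2).choose,
     (key z.1 z.2.1 z.2.2).choose_spec.2.2.2,
     (key z.1 z.2.1 z.2.2).choose_spec.2.2.1⟩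
  let f : ℕ → {p : X × Y // Relation.ReflTransGen T (a₀, b₀) p ∧ p ∈ P} :=
    fun n => G^[n] ⟨(a₀, b₀), Relation.ReflTransGen.refl, hP0⟩
  have hfsucc : ∀ n, f (n + 1) = G (f n) := by
    intro n; simp [f, Function.iterate_succ_apply']
  have hRstep : ∀ n, R (f n).1.1 (f (n + 1)).1.1 ∧ ((f (n + 1)).1.1, (f n).1.2) ∈ Q := by
    intro n
    rw [hfsucc]
    exact ⟨(key (f n).1 (f n).2.1 (f n).2.2).choose_spec.1,
      (key (f n).1 (f n).2.1 (f n).2.2).choose_spec.2.1⟩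
  obtain ⟨i, hi⟩ := hR (fun n => (f n).1.1) (fun n => (hRstep n).1)
  refine ⟨(f (i + 1)).1.1, (f i).1.1, (f i).1.2, ?_, (hRstep i).2, hi, ?_⟩
  · exact (f i).2.1.tail (Or.inl ⟨(hRstep i).1, rfl⟩)
  · have := (f i).2.2; simpa using this
end

section
/- Let X be a set, R a reflexive transitive relation on X, and E an equivalence relation on X. Call a point c R-terminal if R(c) = {c}. Assume: (i) for every b ∈ X there is an R-terminal c with b R c; (ii) for all a, b, c: if a E b and b R c then there is d with a R d and d E c; (iii) for all a, b: if a R b and a E b then b R a. Then for every R-terminal point a and every b with b E a, the point b is R-terminal. -/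
/-- In an `S4.1[h] × S5`-style frame `(X, R, E)` — `R` a preorder satisfying the McKinsey
condition (i), `E` an equivalence relation satisfying the commutativity condition (ii),
and (iii) `R ∩ E ⊆ R⁻¹` — if `a` is `R`-terminal (`R(a) = {a}`) then every point `b`
that is `E`-equivalent to `a` is `R`-terminal. -/
theorem stmt10 {X : Type*} (R E : X → X → Prop)
    (hrefl : Reflexive R) (htrans : Transitive R) (hE : Equivalence E)
    (hMcK : ∀ b : X, ∃ c, R b c ∧ {y | R c y} = {c})
    (hcom : ∀ a b c : X, E a b → R b c → ∃ d, R a d ∧ E d c)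
    (hopp : ∀ a b : X, R a b → E a b → R b a) :
    ∀ a : X, {y | R a y} = {a} → ∀ b : X, E b a → {y | R b y} = {b} := by
  intro a ha b hba
  ext y
  simp only [Set.mem_setOf_eq, Set.mem_singleton_iff]
  constructor
  · intro hby
    obtain ⟨c, hyc, hc⟩ := hMcK y
    have hbc : R b c := htrans hby hyc
    obtain ⟨d, had, hdc⟩ := hcom a b c (hE.symm hba) hbc
    have hda : d = a := by
      have := ha ▸ (Set.mem_setOf_eq ▸ had : d ∈ {y | R a y})
      exact this
    subst hda
    have hbc' : E b c := hE.trans hba hdc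
    have hcb : R c b := hopp b c hbc hbc'
    have hbc_eq : b = c := by
      have := hc ▸ (Set.mem_setOf_eq ▸ hcb : b ∈ {y | R c y})
      exact this
    subst hbc_eq
    have := hc ▸ (Set.mem_setOf_eq ▸ hby : y ∈ {y | R b y})
    exact this
  · rintro rfl; exact hrefl y
end

section
/- Let X be a set with a designated point r and binary relations R, R_l, R_r on X, let Y be a set, and let p ⊆ X×Y. Assume: (i) R_l and R_r are partial functions, i.e., x R_l y and x R_l y' imply y = y', and likewise for R_r; (ii) for all m, t: if r R m and m R_r t then there is m' with r R m' and m' R_l t; (iii) there is m with r R m; (iv) for every m with r R m there exist b ∈ Y and t, t' ∈ X with m R_l t, m R_r t', (t,b) ∉ p and (t',b) ∈ p; (v) for every m with r R m, every b ∈ Y and every t with m R_l t and (t,b) ∈ p, there is t' with m R_r t' and (t',b) ∈ p. Then X is infinite. -/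
/-!
Let `S` be the set of `R_l`-successors of `R`-successors of `r`, and compare its points `t` by
their `p`-sections `p_t = {b | (t, b) ∈ p}`. If `m R_l t` and `m R_r t'`, condition (v) and the
functionality of `R_r` give `p_t ⊆ p_t'`, condition (iv) and the functionality of `R_l` make the
inclusion strict, and (ii) puts `t'` back into `S`. So no point of the nonempty set `S` has a
maximal section, which is impossible when `S` is finite.
-/

theorem Set.infinite_of_forall_exists_lt_apply {α β : Type*} [Preorder β] {s : Set α}
    {f : α → β} (hs : s.Nonempty) (h : ∀ a ∈ s, ∃ b ∈ s, f a < f b) : s.Infinite := by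
  intro hfin
  obtain ⟨a, ha, hmax⟩ := hfin.exists_maximalFor f s hs
  obtain ⟨b, hb, hab⟩ := h a ha
  exact hab.not_ge (hmax hb hab.le)

section SawFrame

variable {X Y : Type*} {R Rl Rr : X → X → Prop} {p : Set (X × Y)} {r m t t' : X}

theorem preimage_prodMk_subset_of_left_of_right
    (hfr : ∀ x y y', Rr x y → Rr x y' → y = y')
    (hmono : ∀ m (b : Y) t, R r m → Rl m t → (t, b) ∈ p → ∃ t', Rr m t' ∧ (t', b) ∈ p)
    (hm : R r m) (ht : Rl m t) (ht' : Rr m t') :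
    Prod.mk t ⁻¹' p ⊆ Prod.mk t' ⁻¹' p := by
  intro b hb
  obtain ⟨t'', ht'', hb''⟩ := hmono m b t hm ht hb
  rwa [hfr m t'' t' ht'' ht'] at hb''

theorem exists_preimage_prodMk_ssubset
    (hfl : ∀ x y y', Rl x y → Rl x y' → y = y')
    (hfr : ∀ x y y', Rr x y → Rr x y' → y = y')
    (hexp : ∀ m t, R r m → Rr m t → ∃ m', R r m' ∧ Rl m' t)
    (hsat : ∀ m, R r m → ∃ (b : Y) (t t' : X), Rl m t ∧ Rr m t' ∧ (t, b) ∉ p ∧ (t', b) ∈ p)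
    (hmono : ∀ m (b : Y) t, R r m → Rl m t → (t, b) ∈ p → ∃ t', Rr m t' ∧ (t', b) ∈ p) :
    ∀ t ∈ {t | ∃ m, R r m ∧ Rl m t}, ∃ t' ∈ {t | ∃ m, R r m ∧ Rl m t},
      Prod.mk t ⁻¹' p ⊂ Prod.mk t' ⁻¹' p := by
  rintro t ⟨m, hm, ht⟩
  obtain ⟨b, t₁, t', ht₁, ht', hbt₁, hbt'⟩ := hsat m hm
  obtain rfl := hfl m t₁ t ht₁ ht
  obtain ⟨m', hm', hm't'⟩ := hexp m t' hm ht'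
  have hsub := preimage_prodMk_subset_of_left_of_right hfr hmono hm ht ht'
  exact ⟨t', ⟨m', hm', hm't'⟩, (Set.ssubset_iff_of_subset hsub).2 ⟨b, hbt', hbt₁⟩⟩

end SawFrame

/-- Key lemma for the failure of the product fmp for `Saw × S5`: under the Saw frame
conditions (i)–(ii) on a frame rooted at `r` and the truth conditions (iii)–(v) of
`φ = ◇⊤ ∧ □◇_{S5}(◇_l ¬p ∧ ◇_r p) ∧ □□_{S5}(◇_l p → ◇_r p)` at `(r, s)` in the product
with an S5-cluster over `Y` (with valuation `p`), the domain `X` must be infinite. -/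
theorem stmt11 {X Y : Type*} (r : X) (R Rl Rr : X → X → Prop) (p : Set (X × Y))
    (hfl : ∀ x y y', Rl x y → Rl x y' → y = y')
    (hfr : ∀ x y y', Rr x y → Rr x y' → y = y')
    (hexp : ∀ m t, R r m → Rr m t → ∃ m', R r m' ∧ Rl m' t)
    (hne : ∃ m, R r m)
    (hsat : ∀ m, R r m → ∃ (b : Y) (t t' : X),
      Rl m t ∧ Rr m t' ∧ (t, b) ∉ p ∧ (t', b) ∈ p)
    (hmono : ∀ m (b : Y) t, R r m → Rl m t → (t, b) ∈ p →
      ∃ t', Rr m t' ∧ (t', b) ∈ p) :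
    Infinite X := by
  obtain ⟨m, hm⟩ := hne
  obtain ⟨-, t, -, ht, -⟩ := hsat m hm
  have hS : {t | ∃ m, R r m ∧ Rl m t}.Infinite :=
    Set.infinite_of_forall_exists_lt_apply ⟨t, m, hm, ht⟩
      (exists_preimage_prodMk_ssubset hfl hfr hexp hsat hmono)
  exact Set.infinite_univ_iff.mp (hS.mono (Set.subset_univ _))
end

section
/- Define the saw frame F_S with domain W = {u} ⊔ {v_i : i ∈ ℕ} ⊔ {w_i : i ∈ ℕ} and relations S = {(u, v_i) : i ∈ ℕ}, S_l = {(v_i, w_i) : i ∈ ℕ}, S_r = {(v_i, w_{i+1}) : i ∈ ℕ}. Let p = {(w_i, j) : i, j ∈ ℕ, j < i} ⊆ W × ℕ. Then: (a) S_l and S_r are partial functions; (b) the threefold composition (S∪S_l∪S_r)∘(S∪S_l∪S_r)∘(S∪S_l∪S_r) is empty; (c) for all m, t: if u S m and m S_r t then there is m' with u S m' and m' S_l t; (d) there is m with u S m; (e) for every m with u S m there exist b ∈ ℕ and t, t' with m S_l t, m S_r t', (t,b) ∉ p and (t',b) ∈ p; (f) for all m, b, t with u S m, m S_l t and (t,b)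 ∈ p, there is t' with m S_r t' and (t',b) ∈ p. -/
/-- The domain of the saw frame: `u`, the points `v i`, and the points `w i`. -/
abbrev SawDom : Type := Unit ⊕ ℕ ⊕ ℕ

/-- The root `u` of the saw frame. -/
def sawU : SawDom := Sum.inl ()

/-- The middle points `v i` of the saw frame. -/
def sawV (i : ℕ) : SawDom := Sum.inr (Sum.inl i)

/-- The top points `w i` of the saw frame. -/
def sawW (i : ℕ) : SawDom := Sum.inr (Sum.inr i)

/-- The relation `S = {(u, v_i) : i ∈ ℕ}` of the saw frame. -/
def sawS : SawDom → SawDom → Prop := fun x y => x = sawU ∧ ∃ i, y = sawV i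

/-- The relation `S_l = {(v_i, w_i) : i ∈ ℕ}` of the saw frame. -/
def sawSl : SawDom → SawDom → Prop := fun x y => ∃ i, x = sawV i ∧ y = sawW i

/-- The relation `S_r = {(v_i, w_{i+1}) : i ∈ ℕ}` of the saw frame. -/
def sawSr : SawDom → SawDom → Prop := fun x y => ∃ i, x = sawV i ∧ y = sawW (i + 1)

/-- The union `S ∪ S_l ∪ S_r` of the relations of the saw frame. -/
def sawT : SawDom → SawDom → Prop := fun x y => sawS x y ∨ sawSl x y ∨ sawSr x y

/-- The valuation `p = {(w_i, j) : j < i} ⊆ W × ℕ`. -/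
def sawP : Set (SawDom × ℕ) := {q | ∃ i j, q = (sawW i, j) ∧ j < i}

lemma sawT_fromW (i : ℕ) (y : SawDom) : ¬ sawT (sawW i) y := by
  rintro (⟨h, -⟩ | ⟨j, h, -⟩ | ⟨j, h, -⟩) <;> simp [sawW, sawU, sawV] at h

lemma sawT_fromV (i : ℕ) (y : SawDom) : sawT (sawV i) y → ∃ j, y = sawW j := by
  rintro (⟨h, -⟩ | ⟨j, h, hy⟩ | ⟨j, h, hy⟩)
  · simp [sawV, sawU] at h
  · exact ⟨j, hy⟩
  · exact ⟨j + 1, hy⟩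

lemma sawT_fromU (y : SawDom) : sawT sawU y → ∃ j, y = sawV j := by
  rintro (⟨-, j, hy⟩ | ⟨j, h, -⟩ | ⟨j, h, -⟩)
  · exact ⟨j, hy⟩
  · simp [sawV, sawU] at h
  · simp [sawV, sawU] at h

/-- Properties of the saw frame `F_S` and of the valuation `sawP` in `F_S × (ℕ, ℕ×ℕ)`:
(a) `S_l` and `S_r` are partial functions; (b) the threefold composition of
`S ∪ S_l ∪ S_r` with itself is empty; (c) `u S m S_r t` implies `u S m' S_l t` for some
`m'`; (d) `u` has an `S`-successor; (e),(f) the formula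
`◇⊤ ∧ □◇_{S5}(◇_l ¬p ∧ ◇_r p) ∧ □□_{S5}(◇_l p → ◇_r p)` is true at `(u, 0)`. -/
theorem stmt12 :
    (∀ x y y', sawSl x y → sawSl x y' → y = y') ∧
    (∀ x y y', sawSr x y → sawSr x y' → y = y') ∧
    (∀ x y, ¬ Relation.Comp (Relation.Comp sawT sawT) sawT x y) ∧
    (∀ m t, sawS sawU m → sawSr m t → ∃ m', sawS sawU m' ∧ sawSl m' t) ∧
    (∃ m, sawS sawU m) ∧
    (∀ m, sawS sawU m → ∃ (b : ℕ) (t t' : SawDom),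
      sawSl m t ∧ sawSr m t' ∧ (t, b) ∉ sawP ∧ (t', b) ∈ sawP) ∧
    (∀ m (b : ℕ) t, sawS sawU m → sawSl m t → (t, b) ∈ sawP →
      ∃ t', sawSr m t' ∧ (t', b) ∈ sawP) := by
  refine ⟨?_, ?_, ?_, ?_, ?_, ?_, ?_⟩
  · rintro x y y' ⟨i, hx, hy⟩ ⟨i', hx', hy'⟩
    subst hx hy hy'
    simp [sawV, sawW] at hx' ⊢
    omega
  · rintro x y y' ⟨i, hx, hy⟩ ⟨i', hx', hy'⟩
    subst hx hy hy'
    simp [sawV, sawW] at hx' ⊢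
    omega
  · rintro x y ⟨b, ⟨a, h1, h2⟩, h3⟩
    rcases x with _ | x | i
    · obtain ⟨j, rfl⟩ := sawT_fromU a h1
      obtain ⟨k, rfl⟩ := sawT_fromV j b h2
      exact sawT_fromW k y h3
    · obtain ⟨k, rfl⟩ := sawT_fromV x a h1
      exact sawT_fromW k b h2
    · exact sawT_fromW i a h1
  · rintro m t hm ⟨i, rfl, rfl⟩
    exact ⟨sawV (i + 1), ⟨rfl, _, rfl⟩, i + 1, rfl, rfl⟩
  · exact ⟨sawV 0, rfl, 0, rfl⟩
  · rintro m ⟨-, i, rfl⟩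
    refine ⟨i, sawW i, sawW (i + 1), ⟨i, rfl, rfl⟩, ⟨i, rfl, rfl⟩, ?_, ⟨i + 1, i, rfl, by omega⟩⟩
    rintro ⟨i', j, h, hlt⟩
    simp [sawW, Prod.ext_iff] at h
    omega
  · rintro m b t hm ⟨i, rfl, rfl⟩ ⟨i', j, h, hlt⟩
    simp [sawW, Prod.ext_iff] at h
    exact ⟨sawW (i + 1), ⟨i, rfl, rfl⟩, i + 1, b, rfl, by omega⟩
end

section
/- Let T be the tack frame: domain ω ∪ {ω} with α R β iff (α < ω or β = ω), and let Ω = (ℕ, ℕ×ℕ). Let H = T × Ω be the product frame with horizontal relation R₁ ((α,m) R₁ (β,n) iff α R β and m = n) and vertical relation R₂ ((α,m) R₂ (β,n) iff α = β). Let ≡ be the equivalence on dom H identifying all points (ω,m), m ∈ ℕ, and equal elsewhere, and let H/≡ be the quotient frame with [x] R̃_i [y] iff x' R_i y' for some x' ≡ x, y' ≡ y. For a frame K = (Z, S₁, S₂), P ⊆ Z and x ∈ Z, say Φ(K,P,x) holds if: whenever there are y, z with x S₂ y, y S₁ z and S₁(z) ⊆ P, then for every z' with x S₁ z' there is w with z'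 S₁ w and w ∈ P. Then: (1) the quotient map H → H/≡ is a surjective p-morphism; (2) Φ(H/≡, P, x) holds for every P ⊆ dom(H/≡) and every x; (3) Φ(H, {(ω,1)}, (0,0)) fails. -/
/-- The domain of the product `H = T × Ω` of the tack frame `T` (domain `ω ∪ {ω}`,
encoded as `Option ℕ` with `none = ω`) with the countable S5-cluster `Ω = (ℕ, ℕ×ℕ)`. -/
abbrev TackPt : Type := Option ℕ × ℕ

/-- The horizontal relation of `H`: `(α, m) R₁ (β, n)` iff `α R β` in the tack frame
(`α < ω` or `β = ω`) and `m = n`. -/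
def tackR1 : TackPt → TackPt → Prop :=
  fun p q => ((∃ k, p.1 = some k) ∨ q.1 = none) ∧ p.2 = q.2

/-- The vertical relation of `H`: `(α, m) R₂ (β, n)` iff `α = β`. -/
def tackR2 : TackPt → TackPt → Prop := fun p q => p.1 = q.1

/-- The equivalence `≡` on `dom H` identifying all points `(ω, m)` and equal elsewhere. -/
def tackE : TackPt → TackPt → Prop :=
  fun p q => p = q ∨ (p.1 = none ∧ q.1 = none)

/-- `≡` as a setoid on `dom H`. -/
def tackSetoid : Setoid TackPt where
  r := tackE
  iseqv := by
    constructor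
    · intro x; exact Or.inl rfl
    · intro x y h
      rcases h with h | h
      · exact Or.inl h.symm
      · exact Or.inr ⟨h.2, h.1⟩
    · intro x y z h1 h2
      rcases h1 with h1 | h1 <;> rcases h2 with h2 | h2
      · exact Or.inl (h1.trans h2)
      · subst h1; exact Or.inr h2
      · subst h2; exact Or.inr h1
      · exact Or.inr ⟨h1.1, h2.2⟩

/-- The first relation of the quotient frame `H/≡`:
`[x] R̃₁ [y]` iff `x' R₁ y'` for some representatives `x' ≡ x`, `y' ≡ y`. -/
def tackQR1 : Quotient tackSetoid → Quotient tackSetoid → Prop :=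
  fun u v => ∃ x y : TackPt,
    u = Quotient.mk tackSetoid x ∧ v = Quotient.mk tackSetoid y ∧ tackR1 x y

/-- The second relation of the quotient frame `H/≡`. -/
def tackQR2 : Quotient tackSetoid → Quotient tackSetoid → Prop :=
  fun u v => ∃ x y : TackPt,
    u = Quotient.mk tackSetoid x ∧ v = Quotient.mk tackSetoid y ∧ tackR2 x y

/-- `f` is a p-morphism from `(X, R)` onto the relation `S` on `Y`. -/
def IsPMorphism {X Y : Type*} (R : X → X → Prop) (S : Y → Y → Prop) (f : X → Y) : Prop :=
  (∀ x y, R x y → S (f x) (f y)) ∧ (∀ x u, S (f x) u → ∃ y, R x y ∧ f y = u)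

/-- `Phi S₁ S₂ P x` : truth at `x` of the formula `◇₂◇₁□₁p → □₁◇₁p` in the frame
`(Z, S₁, S₂)` under the valuation `p ↦ P`. -/
def Phi {Z : Type*} (S1 S2 : Z → Z → Prop) (P : Set Z) (x : Z) : Prop :=
  (∃ y z, S2 x y ∧ S1 y z ∧ ∀ w, S1 z w → w ∈ P) →
    ∀ z', S1 x z' → ∃ w, S1 z' w ∧ w ∈ P

/-- `Tack × S5` is not prelocally tabular, semantic content:
(1) the quotient map `H → H/≡` is a surjective p-morphism (for both relations);
(2) `◇₂◇₁□₁p → □₁◇₁p` is valid in `H/≡`;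
(3) `◇₂◇₁□₁p → □₁◇₁p` fails in `H` at `(0,0)` under the valuation `p ↦ {(ω,1)}`. -/
theorem stmt13 :
    Function.Surjective (Quotient.mk tackSetoid) ∧
    IsPMorphism tackR1 tackQR1 (Quotient.mk tackSetoid) ∧
    IsPMorphism tackR2 tackQR2 (Quotient.mk tackSetoid) ∧
    (∀ (P : Set (Quotient tackSetoid)) (x : Quotient tackSetoid), Phi tackQR1 tackQR2 P x) ∧
    ¬ Phi tackR1 tackR2 ({((none : Option ℕ), 1)} : Set TackPt) ((some 0 : Option ℕ), 0) := by
  refine ⟨fun u => u.exists_rep, ⟨?_, ?_⟩, ⟨?_, ?_⟩, ?_, ?_⟩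
  · intro x y h; exact ⟨x, y, rfl, rfl, h⟩
  · rintro x u ⟨x', y', hx, hu, hr⟩
    rcases Quotient.exact hx with h | h
    · exact ⟨y', h ▸ hr, hu.symm⟩
    · have hy' : y'.1 = none := by
        rcases hr.1 with ⟨k, hk⟩ | hn
        · rw [h.2] at hk; exact absurd hk (by simp)
        · exact hn
      refine ⟨x, ⟨Or.inr h.1, rfl⟩, ?_⟩
      rw [hu]; exact Quotient.sound (Or.inr ⟨h.1, hy'⟩)
  · intro x y h; exact ⟨x, y, rfl, rfl, h⟩
  · rintro x u ⟨x', y', hx, hu, hr⟩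
    rcases Quotient.exact hx with h | h
    · subst h
      refine ⟨(x.1, y'.2), rfl, ?_⟩
      rw [hu]
      exact congrArg _ (Prod.ext hr rfl)
    · have hy' : y'.1 = none := by rw [← hr, h.2]
      refine ⟨(none, x.2), h.1, ?_⟩
      rw [hu]; exact Quotient.sound (Or.inr ⟨rfl, hy'⟩)
  · rintro P x ⟨y, z, _, _, hbox⟩ z' hz'
    obtain ⟨a, ha⟩ := z.exists_rep
    obtain ⟨b, hb⟩ := z'.exists_rep
    have homega : (⟦(none, a.2)⟧ : Quotient tackSetoid) ∈ P :=
      hbox _ ⟨a, (none, a.2), ha.symm, rfl, Or.inr rfl, rfl⟩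
    refine ⟨⟦(none, a.2)⟧, ⟨b, (none, b.2), hb.symm, ?_, Or.inr rfl, rfl⟩, homega⟩
    exact Quotient.sound (Or.inr ⟨rfl, rfl⟩)
  · intro h
    obtain ⟨w, hw, hwP⟩ := h ⟨(some 0, 1), (none, 1), rfl, ⟨Or.inr rfl, rfl⟩,
      fun w hw => by
        have h1 : w.1 = none := by
          rcases hw.1 with ⟨k, hk⟩ | hn
          · exact absurd hk (by simp)
          · exact hn
        have : w = (none, 1) := Prod.ext h1 hw.2.symm
        simp [this]⟩
      (some 0, 0) ⟨Or.inl ⟨0, rfl⟩, rfl⟩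
    have : w = ((none : Option ℕ), 1) := hwP
    rw [this] at hw
    exact absurd hw.2 (by simp)
end

section
/- Let A be a finite index set and F = (X,(R_a)_{a∈A}) a frame such that X = X₁ ∪ X₂ for disjoint nonempty X₁, X₂, the restriction F↾X₁ is a generated subframe of F (i.e., R_a(x) ⊆ X₁ for every x ∈ X₁ and a ∈ A), and F↾X_i is f_i-tunable for monotone functions f_i:ℕ→ℕ (i = 1,2). Then F is g-tunable for g(n) = f₁(n) + f₂(n·2^{f₁(n)·|A|}). -/
lemma ncard_prod' {α β : Type*} (s : Set α) (t : Set β) :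
    (s ×ˢ t).ncard = s.ncard * t.ncard := by
  rw [← Nat.card_coe_set_eq, ← Nat.card_coe_set_eq, ← Nat.card_coe_set_eq,
    Nat.card_congr (Equiv.Set.prod s t), Nat.card_prod]

lemma ncard_powerset' {α : Type*} (T : Set α) (h : T.Finite) :
    (𝒫 T).ncard = 2 ^ T.ncard := by
  have : Fintype T := h.fintype
  rw [← Nat.card_coe_set_eq, ← Nat.card_coe_set_eq,
    Nat.card_congr (Equiv.Set.powerset T), Nat.card_eq_fintype_card, Fintype.card_set,
    Nat.card_eq_fintype_card]

/-- Block uniqueness in a partition. -/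
lemma part_unique {X : Type*} {P : Set (Set X)} (hP : IsPartition P) {x : X} {U V : Set X}
    (hU : U ∈ P) (hV : V ∈ P) (hxU : x ∈ U) (hxV : x ∈ V) : U = V := by
  by_contra h
  exact Set.disjoint_left.mp (hP.2.1 U hU V hV h) hxU hxV

/-- Restriction of a partition to a subtype. -/
lemma restrict_isPartition {X : Type*} {P : Set (Set X)} (hP : IsPartition P) (S : Set X) :
    IsPartition {V : Set S | V.Nonempty ∧ ∃ U ∈ P, V = Subtype.val ⁻¹' U} := by
  refine ⟨fun U hU => hU.1, ?_, ?_⟩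
  · rintro V ⟨-, U, hU, rfl⟩ V' ⟨-, U', hU', rfl⟩ hne
    have hUU' : U ≠ U' := by rintro rfl; exact hne rfl
    exact (hP.2.1 U hU U' hU' hUU').preimage _
  · rw [Set.eq_univ_iff_forall]
    intro x
    have hx : (x : X) ∈ ⋃₀ P := by rw [hP.2.2]; trivial
    obtain ⟨U, hU, hxU⟩ := hx
    exact ⟨Subtype.val ⁻¹' U, ⟨⟨x, hxU⟩, U, hU, rfl⟩, hxU⟩

lemma restrict_card {X : Type*} {P : Set (Set X)} (hfin : P.Finite) (S : Set X) :
    {V : Set S | V.Nonempty ∧ ∃ U ∈ P, V = Subtype.val ⁻¹' U}.Finite ∧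
    {V : Set S | V.Nonempty ∧ ∃ U ∈ P, V = Subtype.val ⁻¹' U}.ncard ≤ P.ncard := by
  have hsub : {V : Set S | V.Nonempty ∧ ∃ U ∈ P, V = Subtype.val ⁻¹' U} ⊆
      (fun U => Subtype.val ⁻¹' U) '' P := by
    rintro V ⟨-, U, hU, rfl⟩; exact ⟨U, hU, rfl⟩
  exact ⟨(hfin.image _).subset hsub,
    (Set.ncard_le_ncard hsub (hfin.image _)).trans (Set.ncard_image_le hfin)⟩

/-- If `X = X₁ ∪ X₂` (disjoint, nonempty), `F↾X₁` is a generated subframe of `F`, and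
`F↾Xᵢ` is `fᵢ`-tunable for monotone `fᵢ`, then `F` is `g`-tunable for
`g n = f₁ n + f₂ (n · 2^(f₁ n · |A|))`. -/
theorem stmt14 {A X : Type*} [Fintype A] [Nonempty X]
    (R : A → X → X → Prop) (X₁ X₂ : Set X)
    (hne1 : X₁.Nonempty) (hne2 : X₂.Nonempty)
    (hdisj : Disjoint X₁ X₂) (hcover : X₁ ∪ X₂ = Set.univ)
    (hgen : ∀ x ∈ X₁, ∀ a, ∀ y, R a x y → y ∈ X₁)
    (f₁ f₂ : ℕ → ℕ) (hm1 : Monotone f₁) (hm2 : Monotone f₂)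
    (h1 : Tunable (fun a (p q : X₁) => R a p.1 q.1) f₁)
    (h2 : Tunable (fun a (p q : X₂) => R a p.1 q.1) f₂) :
    Tunable R (fun n => f₁ n + f₂ (n * 2 ^ (f₁ n * Fintype.card A))) := by
  intro P hP hPfin
  set n := P.ncard with hn
  -- restriction of P to X₁
  set P₁ : Set (Set X₁) := {V | V.Nonempty ∧ ∃ U ∈ P, V = Subtype.val ⁻¹' U} with hP₁def
  have hP₁ : IsPartition P₁ := restrict_isPartition hP X₁
  obtain ⟨hP₁fin, hP₁card⟩ := restrict_card hPfin X₁
  obtain ⟨Q₁, hQ₁part, hQ₁ref, hQ₁tuned, hQ₁fin, hQ₁card⟩ := h1 P₁ hP₁ hP₁fin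
  have hQ₁card' : Q₁.ncard ≤ f₁ n := hQ₁card.trans (hm1 hP₁card)
  -- block function for P
  have hblk : ∀ x : X, ∃ U, U ∈ P ∧ x ∈ U := by
    intro x
    have hx : x ∈ ⋃₀ P := by rw [hP.2.2]; trivial
    obtain ⟨U, hU, hxU⟩ := hx
    exact ⟨U, hU, hxU⟩
  choose blk hblkP hblkmem using hblk
  -- typing map on X₂
  set φ : X₂ → Set X × Set (A × Set X₁) :=
    (fun x => (blk ↑x, {p | p.2 ∈ Q₁ ∧ ∃ y ∈ p.2, R p.1 ↑x ↑y})) with hφdef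
  set P₂ : Set (Set X₂) := (fun t => φ ⁻¹' {t}) '' (Set.range φ) with hP₂def
  have hP₂part : IsPartition P₂ := by
    refine ⟨?_, ?_, ?_⟩
    · rintro V ⟨t, ⟨x, rfl⟩, rfl⟩; exact ⟨x, rfl⟩
    · rintro V ⟨t, -, rfl⟩ V' ⟨t', -, rfl⟩ hne
      have htt' : t ≠ t' := by rintro rfl; exact hne rfl
      rw [Set.disjoint_left]
      rintro x hx hx'
      exact htt' ((Set.mem_preimage.mp hx).symm.trans (Set.mem_preimage.mp hx'))
    · rw [Set.eq_univ_iff_forall]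
      intro x
      exact ⟨φ ⁻¹' {φ x}, ⟨φ x, ⟨x, rfl⟩, rfl⟩, rfl⟩
  have hrange_sub : Set.range φ ⊆ P ×ˢ 𝒫 ((Set.univ : Set A) ×ˢ Q₁) := by
    rintro - ⟨x, rfl⟩
    exact ⟨hblkP x, fun p hp => ⟨trivial, hp.1⟩⟩
  have hpowfin : ((Set.univ : Set A) ×ˢ Q₁).Finite := Set.finite_univ.prod hQ₁fin
  have hprodfin : (P ×ˢ 𝒫 ((Set.univ : Set A) ×ˢ Q₁)).Finite := hPfin.prod hpowfin.powerset
  have hrangefin : (Set.range φ).Finite := hprodfin.subset hrange_sub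
  have hP₂fin : P₂.Finite := hrangefin.image _
  have hP₂card : P₂.ncard ≤ n * 2 ^ (f₁ n * Fintype.card A) := by
    calc P₂.ncard ≤ (Set.range φ).ncard := Set.ncard_image_le hrangefin
      _ ≤ (P ×ˢ 𝒫 ((Set.univ : Set A) ×ˢ Q₁)).ncard :=
          Set.ncard_le_ncard hrange_sub hprodfin
      _ = n * 2 ^ (((Set.univ : Set A) ×ˢ Q₁).ncard) := by
          rw [ncard_prod', ncard_powerset' _ hpowfin]
      _ = n * 2 ^ (Fintype.card A * Q₁.ncard) := by
          rw [ncard_prod', Set.ncard_univ, Nat.card_eq_fintype_card]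
      _ ≤ n * 2 ^ (f₁ n * Fintype.card A) := by
          have : Fintype.card A * Q₁.ncard ≤ f₁ n * Fintype.card A := by
            rw [mul_comm]; exact Nat.mul_le_mul_right _ hQ₁card'
          exact Nat.mul_le_mul_left _ (Nat.pow_le_pow_right (by norm_num) this)
  obtain ⟨Q₂, hQ₂part, hQ₂ref, hQ₂tuned, hQ₂fin, hQ₂card⟩ := h2 P₂ hP₂part hP₂fin
  have hQ₂card' : Q₂.ncard ≤ f₂ (n * 2 ^ (f₁ n * Fintype.card A)) := hQ₂card.trans (hm2 hP₂card)
  -- the final partition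
  refine ⟨(Set.image Subtype.val '' Q₁) ∪ (Set.image Subtype.val '' Q₂), ?_, ?_, ?_, ?_, ?_⟩
  · -- IsPartition
    refine ⟨?_, ?_, ?_⟩
    · rintro U' (⟨U, hU, rfl⟩ | ⟨U, hU, rfl⟩)
      · exact (hQ₁part.1 U hU).image _
      · exact (hQ₂part.1 U hU).image _
    · have key1 : ∀ U ∈ Q₁, (Subtype.val '' U : Set X) ⊆ X₁ := by
        rintro U - - ⟨u, -, rfl⟩; exact u.2
      have key2 : ∀ U ∈ Q₂, (Subtype.val '' U : Set X) ⊆ X₂ := by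
        rintro U - - ⟨u, -, rfl⟩; exact u.2
      rintro U' (⟨U, hU, rfl⟩ | ⟨U, hU, rfl⟩) V' (⟨V, hV, rfl⟩ | ⟨V, hV, rfl⟩) hne
      · have hUV : U ≠ V := by rintro rfl; exact hne rfl
        exact (Set.disjoint_image_iff Subtype.val_injective).mpr (hQ₁part.2.1 U hU V hV hUV)
      · exact hdisj.mono (key1 U hU) (key2 V hV)
      · exact hdisj.symm.mono (key2 U hU) (key1 V hV)
      · have hUV : U ≠ V := by rintro rfl; exact hne rfl
        exact (Set.disjoint_image_iff Subtype.val_injective).mpr (hQ₂part.2.1 U hU V hV hUV)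
    · rw [Set.eq_univ_iff_forall]
      intro x
      have hx : x ∈ X₁ ∪ X₂ := hcover ▸ Set.mem_univ x
      rcases hx with hx | hx
      · have : (⟨x, hx⟩ : X₁) ∈ ⋃₀ Q₁ := by rw [hQ₁part.2.2]; trivial
        obtain ⟨U, hU, hmem⟩ := this
        exact ⟨Subtype.val '' U, Or.inl ⟨U, hU, rfl⟩, ⟨⟨x, hx⟩, hmem, rfl⟩⟩
      · have : (⟨x, hx⟩ : X₂) ∈ ⋃₀ Q₂ := by rw [hQ₂part.2.2]; trivial
        obtain ⟨U, hU, hmem⟩ := this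
        exact ⟨Subtype.val '' U, Or.inr ⟨U, hU, rfl⟩, ⟨⟨x, hx⟩, hmem, rfl⟩⟩
  · -- Refines
    rintro U' (⟨U, hU, rfl⟩ | ⟨U, hU, rfl⟩)
    · obtain ⟨V, hV, hUV⟩ := hQ₁ref U hU
      obtain ⟨-, W, hW, rfl⟩ := hV
      refine ⟨W, hW, ?_⟩
      rintro - ⟨u, hu, rfl⟩
      exact hUV hu
    · obtain ⟨V, hV, hUV⟩ := hQ₂ref U hU
      obtain ⟨t, ht, rfl⟩ := hV
      refine ⟨t.1, ?_, ?_⟩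
      · obtain ⟨x, hx⟩ := ht
        rw [← hx]; exact hblkP _
      · rintro - ⟨u, hu, rfl⟩
        have := hUV hu
        rw [Set.mem_preimage, Set.mem_singleton_iff] at this
        rw [← this]
        exact hblkmem _
  · -- TunedFrame
    intro a
    rintro U' (⟨U, hU, rfl⟩ | ⟨U, hU, rfl⟩) V' (⟨V, hV, rfl⟩ | ⟨V, hV, rfl⟩)
        ⟨-, ⟨u₀, hu₀, rfl⟩, -, ⟨v₀, hv₀, rfl⟩, hR⟩ - ⟨u, hu, rfl⟩
    · -- Q₁ → Q₁
      obtain ⟨b, hb, hRb⟩ := hQ₁tuned a U hU V hV ⟨u₀, hu₀, v₀, hv₀, hR⟩ u hu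
      exact ⟨↑b, ⟨b, hb, rfl⟩, hRb⟩
    · -- Q₁ → Q₂ : impossible
      exact absurd (hgen ↑u₀ u₀.2 a ↑v₀ hR)
        (fun h => Set.disjoint_left.mp hdisj h v₀.2)
    · -- Q₂ → Q₁ : uses the typing map
      obtain ⟨W, hW, hUW⟩ := hQ₂ref U hU
      obtain ⟨t, -, rfl⟩ := hW
      have ht₀ : φ u₀ = t := hUW hu₀
      have htu : φ u = t := hUW hu
      have hmem : (a, V) ∈ (φ u₀).2 := ⟨hV, v₀, hv₀, hR⟩
      rw [ht₀, ← htu] at hmem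
      obtain ⟨-, y, hy, hRy⟩ := hmem
      exact ⟨↑y, ⟨y, hy, rfl⟩, hRy⟩
    · -- Q₂ → Q₂
      obtain ⟨b, hb, hRb⟩ := hQ₂tuned a U hU V hV ⟨u₀, hu₀, v₀, hv₀, hR⟩ u hu
      exact ⟨↑b, ⟨b, hb, rfl⟩, hRb⟩
  · exact (hQ₁fin.image _).union (hQ₂fin.image _)
  · calc ((Set.image Subtype.val '' Q₁) ∪ (Set.image Subtype.val '' Q₂)).ncard
        ≤ (Set.image Subtype.val '' Q₁).ncard + (Set.image Subtype.val '' Q₂).ncard :=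
          Set.ncard_union_le _ _
      _ ≤ Q₁.ncard + Q₂.ncard :=
          Nat.add_le_add (Set.ncard_image_le hQ₁fin) (Set.ncard_image_le hQ₂fin)
      _ ≤ f₁ n + f₂ (n * 2 ^ (f₁ n * Fintype.card A)) := Nat.add_le_add hQ₁card' hQ₂card'
end

section
/- Let R₁ and R₂ be equivalence relations on a nonempty set X such that for all a, b ∈ X there is c with a R₁ c and c R₂ b. Let ∼ = R₁ ∩ R₂. Then the map X/∼ → (X/R₁) × (X/R₂) sending [x]_∼ to ([x]_{R₁}, [x]_{R₂}) is a bijection, and for all x, y ∈ X: (there exist x' ∼ x, y' ∼ y with x' R₁ y') iff x R₁ y, and likewise for R₂. Consequently the quotient frame (X/∼, R̃₁, R̃₂) is isomorphic to the rectangle (X/R₁) × (X/R₂), i.e., the product of the two universal frames (X/R₁, all pairs) and (X/R₂, all pairs). -/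
/-- Let `R₁, R₂` be equivalence relations on a nonempty set `X` such that for all `a, b`
there is `c` with `a R₁ c` and `c R₂ b` (point-generatedness of the `S5²`-frame
`(X, R₁, R₂)`), and let `∼ = R₁ ∩ R₂`. Then the map `ψ x = ([x]_{R₁}, [x]_{R₂})`:
(a) is surjective onto `(X/R₁) × (X/R₂)`;
(b) identifies exactly the `∼`-equivalent points, so it descends to a bijection
    `X/∼ → (X/R₁) × (X/R₂)`;
(c),(d) `(∃ x' ∼ x, y' ∼ y, x' R₁ y') ↔ x R₁ y`, and likewise for `R₂`;
(e) `x R₁ y ↔ (ψ x).1 = (ψ y).1` and `x R₂ y ↔ (ψ x).2 = (ψ y).2`, so under `ψ` the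
    quotient frame `(X/∼, R̃₁, R̃₂)` is isomorphic to the rectangle `(X/R₁) × (X/R₂)`,
    the product of the two universal frames. -/
theorem stmt17 {X : Type*} [Nonempty X] (R₁ R₂ : X → X → Prop)
    (h1 : Equivalence R₁) (h2 : Equivalence R₂)
    (hgen : ∀ a b : X, ∃ c, R₁ a c ∧ R₂ c b) :
    let ψ : X → Quotient (⟨R₁, h1⟩ : Setoid X) × Quotient (⟨R₂, h2⟩ : Setoid X) :=
      fun x => (Quotient.mk (⟨R₁, h1⟩ : Setoid X) x, Quotient.mk (⟨R₂, h2⟩ : Setoid X) x)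
    Function.Surjective ψ ∧
    (∀ x y : X, ψ x = ψ y ↔ (R₁ x y ∧ R₂ x y)) ∧
    (∀ x y : X,
      (∃ x' y' : X, (R₁ x' x ∧ R₂ x' x) ∧ (R₁ y' y ∧ R₂ y' y) ∧ R₁ x' y') ↔ R₁ x y) ∧
    (∀ x y : X,
      (∃ x' y' : X, (R₁ x' x ∧ R₂ x' x) ∧ (R₁ y' y ∧ R₂ y' y) ∧ R₂ x' y') ↔ R₂ x y) ∧
    (∀ x y : X, (R₁ x y ↔ (ψ x).1 = (ψ y).1) ∧ (R₂ x y ↔ (ψ x).2 = (ψ y).2)) := by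
  intro ψ
  have hkey : ∀ x y : X, ψ x = ψ y ↔ (R₁ x y ∧ R₂ x y) := by
    intro x y
    constructor
    · intro h
      rw [Prod.ext_iff] at h
      exact ⟨Quotient.eq''.mp h.1, Quotient.eq''.mp h.2⟩
    · intro ⟨ha, hb⟩
      exact Prod.ext (Quotient.sound ha) (Quotient.sound hb)
  refine ⟨?_, hkey, ?_, ?_, ?_⟩
  · rintro ⟨q₁, q₂⟩
    obtain ⟨a, rfl⟩ := Quotient.exists_rep q₁
    obtain ⟨b, rfl⟩ := Quotient.exists_rep q₂
    obtain ⟨c, hc1, hc2⟩ := hgen a b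
    exact ⟨c, Prod.ext (Quotient.sound (h1.symm hc1)) (Quotient.sound hc2)⟩
  · intro x y
    constructor
    · rintro ⟨x', y', ⟨hx1, _⟩, ⟨hy1, _⟩, hxy⟩
      exact h1.trans (h1.symm hx1) (h1.trans hxy hy1)
    · intro h
      exact ⟨x, y, ⟨h1.refl x, h2.refl x⟩, ⟨h1.refl y, h2.refl y⟩, h⟩
  · intro x y
    constructor
    · rintro ⟨x', y', ⟨_, hx2⟩, ⟨_, hy2⟩, hxy⟩
      exact h2.trans (h2.symm hx2) (h2.trans hxy hy2)
    · intro h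
      exact ⟨x, y, ⟨h1.refl x, h2.refl x⟩, ⟨h1.refl y, h2.refl y⟩, h⟩
  · intro x y
    exact ⟨⟨fun h => Quotient.sound h, fun h => Quotient.eq''.mp h⟩,
      ⟨fun h => Quotient.sound h, fun h => Quotient.eq''.mp h⟩⟩
end
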